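/- arXiv:0911.2589 — 7 statements merged into one kernel-verified Lean document; each statement's English description precedes it below -/
import Mathlib

section
/- If f : E(G) → E(H) is a cut-continuous mapping (the preimage of every cut of H is a cut of G), then x(G) ≤ x(H). -/
/-! Pulling back each cut of a cover of `H` along a cut-continuous map `f` gives a cut of `G`,
and an edge `e` of `G` lies in the pullback of a cut exactly when `f e` lies in the cut; so every
`n/k`-cover of `H` yields an `n/k`-cover of `G`. Since `H` is finite, its vertex stars form a
`|W|/1`-cover, so the infimum defining `x(H)` ranges over a nonempty set of nonnegative reals. -/

attribute [local instance] Classical.propDecidable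

/-- A cut in a graph: the set of edges leaving some vertex set `W`. -/
def IsCut {V : Type*} (G : SimpleGraph V) (X : Set (Sym2 V)) : Prop :=
  ∃ W : Set V, X = {e | e ∈ G.edgeSet ∧ ∃ a b, e = s(a, b) ∧ a ∈ W ∧ b ∉ W}

/-- An `n/k`-cover: `n` cuts covering every edge at least `k` times. -/
def HasCover {V : Type*} (G : SimpleGraph V) (n k : ℕ) : Prop :=
  ∃ X : Fin n → Set (Sym2 V), (∀ i, IsCut G (X i)) ∧
    ∀ e ∈ G.edgeSet, k ≤ (Finset.univ.filter fun i => e ∈ X i).card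

/-- The fractional cut-covering number `x(G)`. -/
noncomputable def cutCover {V : Type*} (G : SimpleGraph V) : ℝ :=
  sInf { q : ℝ | ∃ n k : ℕ, 0 < k ∧ q = n / k ∧ HasCover G n k }

/-- A mapping on edge sets is cut-continuous if the preimage of every cut is a cut. -/
def CutContinuous {V W : Type*} (G : SimpleGraph V) (H : SimpleGraph W)
    (f : G.edgeSet → H.edgeSet) : Prop :=
  ∀ U : Set (Sym2 W), IsCut H U →
    IsCut G {e | ∃ h : e ∈ G.edgeSet, (f ⟨e, h⟩ : Sym2 W) ∈ U}

lemma HasCover.of_cutContinuous {V W : Type*} {G : SimpleGraph V} {H : SimpleGraph W}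
    {f : G.edgeSet → H.edgeSet} (hf : CutContinuous G H f) {n k : ℕ} (hH : HasCover H n k) :
    HasCover G n k := by
  obtain ⟨X, hcut, hcov⟩ := hH
  refine ⟨fun i => {e | ∃ h : e ∈ G.edgeSet, (f ⟨e, h⟩ : Sym2 W) ∈ X i},
    fun i => hf _ (hcut i), fun e he => ?_⟩
  convert hcov _ (f ⟨e, he⟩).2 using 3
  simp [he]

lemma hasCover_card_one {W : Type*} [Fintype W] (H : SimpleGraph W) :
    HasCover H (Fintype.card W) 1 := by
  set star := fun i : Fin (Fintype.card W) => ({(Fintype.equivFin W).symm i} : Set W)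
  refine ⟨fun i => {e | e ∈ H.edgeSet ∧ ∃ a b, e = s(a, b) ∧ a ∈ star i ∧ b ∉ star i},
    fun i => ⟨star i, rfl⟩, fun e he => ?_⟩
  induction e with
  | h a b =>
    refine Finset.card_pos.mpr ⟨Fintype.equivFin W a, ?_⟩
    simpa [star, he] using (H.mem_edgeSet.mp he).ne'

theorem cutContinuous_cutCover_le_general {V W : Type*} [Fintype W]
    (G : SimpleGraph V) (H : SimpleGraph W)
    (f : G.edgeSet → H.edgeSet) (hf : CutContinuous G H f) :
    cutCover G ≤ cutCover H := by
  refine csInf_le_csInf ⟨0, ?_⟩ ⟨_, Fintype.card W, 1, one_pos, rfl, hasCover_card_one H⟩ ?_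
  · rintro q ⟨n, k, -, rfl, -⟩
    positivity
  · rintro q ⟨n, k, hk, rfl, hcover⟩
    exact ⟨n, k, hk, rfl, hcover.of_cutContinuous hf⟩

/-- If there is a cut-continuous mapping from `G` to `H`, then `x(G) ≤ x(H)`. -/
theorem cutContinuous_cutCover_le {V W : Type*} [Fintype V] [Fintype W]
    (G : SimpleGraph V) (H : SimpleGraph W)
    (hG : G.edgeSet.Nonempty) (hH : H.edgeSet.Nonempty)
    (f : G.edgeSet → H.edgeSet) (hf : CutContinuous G H f) :
    cutCover G ≤ cutCover H :=
  cutContinuous_cutCover_le_general G H f hf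
end

section
/- If G is edge-transitive, then x(G) = 1/b(G). -/
attribute [local instance] Classical.propDecidable

/-- The maximum size of a cut of `G`. -/
noncomputable def maxCut {V : Type*} [Fintype V] (G : SimpleGraph V) : ℕ :=
  sSup { m : ℕ | ∃ X : Set (Sym2 V), IsCut G X ∧ m = X.ncard }

/-- The bipartite density `b(G) = MAXCUT(G)/|E(G)|`. -/
noncomputable def bipDensity {V : Type*} [Fintype V] (G : SimpleGraph V) : ℝ :=
  maxCut G / G.edgeSet.ncard

/-- `G` is edge-transitive: its automorphism group acts transitively on edges. -/
def EdgeTransitive {V : Type*} (G : SimpleGraph V) : Prop :=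
  ∀ e ∈ G.edgeSet, ∀ f ∈ G.edgeSet, ∃ φ : G ≃g G, Sym2.map (⇑φ) e = f

/-!
Counting edge–cut incidences in two ways shows that every `n/k`-cover satisfies
`k · |E| ≤ n · MAXCUT`. Conversely, the images of one maximum cut under all automorphisms cover
every edge equally often, by edge-transitivity, so they form a cover attaining this bound.
-/

open Finset

section

variable {V V' : Type*}

def cutOf (G : SimpleGraph V) (W : Set V) : Set (Sym2 V) :=
  {e | e ∈ G.edgeSet ∧ ∃ a b, e = s(a, b) ∧ a ∈ W ∧ b ∉ W}

lemma isCut_cutOf (G : SimpleGraph V) (W : Set V) : IsCut G (cutOf G W) := ⟨W, rfl⟩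

lemma IsCut.subset_edgeSet {G : SimpleGraph V} {X : Set (Sym2 V)} (h : IsCut G X) :
    X ⊆ G.edgeSet := by
  obtain ⟨W, rfl⟩ := h
  exact fun _ he => he.1

lemma mk_mem_cutOf {G : SimpleGraph V} {W : Set V} {a b : V} :
    s(a, b) ∈ cutOf G W ↔ G.Adj a b ∧ (a ∈ W ∧ b ∉ W ∨ b ∈ W ∧ a ∉ W) := by
  refine and_congr_right fun _ => ⟨?_, ?_⟩
  · rintro ⟨x, y, hxy, hx, hy⟩
    rcases Sym2.eq_iff.1 hxy with ⟨rfl, rfl⟩ | ⟨rfl, rfl⟩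
    exacts [.inl ⟨hx, hy⟩, .inr ⟨hx, hy⟩]
  · rintro (⟨ha, hb⟩ | ⟨hb, ha⟩)
    exacts [⟨a, b, rfl, ha, hb⟩, ⟨b, a, Sym2.eq_swap, hb, ha⟩]

lemma map_mem_cutOf_image_iff {G : SimpleGraph V} {G' : SimpleGraph V'} (φ : G ≃g G')
    {W : Set V} {e : Sym2 V} : Sym2.map φ e ∈ cutOf G' (φ '' W) ↔ e ∈ cutOf G W := by
  induction e using Sym2.ind with
  | h a b => simp [mk_mem_cutOf, φ.injective.mem_set_image, φ.map_adj_iff]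

lemma ncard_cutOf_image {G : SimpleGraph V} {G' : SimpleGraph V'} (φ : G ≃g G') (W : Set V) :
    (cutOf G' (φ '' W)).ncard = (cutOf G W).ncard := by
  have hpre : Sym2.map φ ⁻¹' cutOf G' (φ '' W) = cutOf G W :=
    Set.ext fun _ => map_mem_cutOf_image_iff φ
  rw [← hpre, Set.ncard_preimage_of_injective_subset_range (Sym2.map.injective φ.injective)]
  exact fun e _ => ⟨Sym2.map φ.symm e, by simp [Sym2.map_map]⟩

lemma sum_ncard_eq_sum_card_filter_mem {α ι : Type*} [Fintype ι] {S : Set α} (hS : S.Finite)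
    {X : ι → Set α} (hX : ∀ i, X i ⊆ S) :
    ∑ i, (X i).ncard = ∑ a ∈ hS.toFinset, #{i | a ∈ X i} := by
  have hcard (i : ι) : (X i).ncard = #(hS.toFinset.bipartiteAbove (fun i a => a ∈ X i) i) := by
    rw [Set.ncard_eq_toFinset_card _ (hS.subset (hX i))]
    congr 1
    ext a
    simp only [Set.Finite.mem_toFinset, bipartiteAbove, mem_filter]
    exact ⟨fun ha => ⟨hX i ha, ha⟩, And.right⟩
  simp_rw [hcard]
  exact sum_card_bipartiteAbove_eq_sum_card_bipartiteBelow _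

section maxCut

variable [Fintype V] (G : SimpleGraph V)

lemma bddAbove_ncard_isCut :
    BddAbove {m : ℕ | ∃ X : Set (Sym2 V), IsCut G X ∧ m = X.ncard} := by
  refine ⟨G.edgeSet.ncard, ?_⟩
  rintro m ⟨X, hX, rfl⟩
  exact Set.ncard_le_ncard hX.subset_edgeSet (Set.toFinite _)

variable {G} in
lemma IsCut.ncard_le_maxCut {X : Set (Sym2 V)} (hX : IsCut G X) : X.ncard ≤ maxCut G :=
  le_csSup (bddAbove_ncard_isCut G) ⟨X, hX, rfl⟩

lemma exists_ncard_cutOf_eq_maxCut : ∃ W : Set V, (cutOf G W).ncard = maxCut G := by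
  obtain ⟨X, ⟨W, rfl⟩, hW⟩ :=
    Nat.sSup_mem (s := {m | ∃ X : Set (Sym2 V), IsCut G X ∧ m = X.ncard})
      ⟨_, _, isCut_cutOf G ∅, rfl⟩ (bddAbove_ncard_isCut G)
  exact ⟨W, hW.symm⟩

lemma maxCut_pos (hG : G.edgeSet.Nonempty) : 0 < maxCut G := by
  obtain ⟨e, he⟩ := hG
  induction e using Sym2.ind with
  | h a b =>
    have hab : s(a, b) ∈ cutOf G {a} :=
      mk_mem_cutOf.2 ⟨he, .inl ⟨rfl, (he : G.Adj a b).ne'⟩⟩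
    exact ((Set.ncard_pos (Set.toFinite _)).2 ⟨_, hab⟩).trans_le
      (isCut_cutOf G {a}).ncard_le_maxCut

variable {G}

lemma HasCover.mul_ncard_edgeSet_le {n k : ℕ} (h : HasCover G n k) :
    k * G.edgeSet.ncard ≤ n * maxCut G := by
  obtain ⟨X, hcut, hcov⟩ := h
  have hE := G.edgeSet.toFinite
  calc k * G.edgeSet.ncard = ∑ _e ∈ hE.toFinset, k := by
        rw [sum_const, smul_eq_mul, Set.ncard_eq_toFinset_card _ hE, mul_comm]
    _ ≤ ∑ e ∈ hE.toFinset, #{i | e ∈ X i} :=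
        sum_le_sum fun e he => hcov e (hE.mem_toFinset.1 he)
    _ = ∑ i, (X i).ncard :=
        (sum_ncard_eq_sum_card_filter_mem hE fun i => (hcut i).subset_edgeSet).symm
    _ ≤ ∑ _i : Fin n, maxCut G := sum_le_sum fun i _ => (hcut i).ncard_le_maxCut
    _ = n * maxCut G := by simp

lemma cutCover_eq_of_hasCover {n k : ℕ} (hk : 0 < k) (hG : G.edgeSet.Nonempty)
    (hcover : HasCover G n k) (hnk : k * G.edgeSet.ncard = n * maxCut G) :
    cutCover G = G.edgeSet.ncard / maxCut G := by
  have hc : (0 : ℝ) < maxCut G := Nat.cast_pos.2 (maxCut_pos G hG)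
  refine le_antisymm (csInf_le ⟨0, ?_⟩ ⟨n, k, hk, ?_, hcover⟩)
    (le_csInf ⟨_, n, k, hk, rfl, hcover⟩ ?_)
  · rintro _ ⟨n', k', -, rfl, -⟩
    positivity
  · rw [div_eq_div_iff hc.ne' (Nat.cast_pos.2 hk).ne', mul_comm]
    exact_mod_cast hnk
  · rintro _ ⟨n', k', hk', rfl, hcover'⟩
    rw [div_le_div_iff₀ hc (Nat.cast_pos.2 hk'), mul_comm]
    exact_mod_cast hcover'.mul_ncard_edgeSet_le

end maxCut

lemma hasCover_of_fintype {G : SimpleGraph V} {ι : Type*} [Fintype ι] {X : ι → Set (Sym2 V)}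
    {k : ℕ} (hX : ∀ i, IsCut G (X i)) (hk : ∀ e ∈ G.edgeSet, k ≤ #{i | e ∈ X i}) :
    HasCover G (Fintype.card ι) k := by
  refine ⟨X ∘ (Fintype.equivFin ι).symm, fun i => hX _, fun e he => (hk e he).trans_eq ?_⟩
  exact card_equiv (Fintype.equivFin ι) fun i => by simp

instance SimpleGraph.Iso.finite [Finite V] {G : SimpleGraph V} {G' : SimpleGraph V'} :
    Finite (G ≃g G') :=
  Finite.of_injective _ RelIso.toEquiv_injective

section automorphisms

variable {G : SimpleGraph V} [Fintype (G ≃g G)] (W : Set V)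

lemma card_map_mem_cutOf_image (ψ : G ≃g G) (e : Sym2 V) :
    #{φ : G ≃g G | Sym2.map ψ e ∈ cutOf G (φ '' W)} =
      #{φ : G ≃g G | e ∈ cutOf G (φ '' W)} := by
  refine (card_equiv (Equiv.mulLeft ψ) fun φ => ?_).symm
  simp [RelIso.coe_mul, ← Set.image_image, map_mem_cutOf_image_iff]

lemma EdgeTransitive.card_mem_cutOf_image_eq (ht : EdgeTransitive G) {e f : Sym2 V}
    (he : e ∈ G.edgeSet) (hf : f ∈ G.edgeSet) :
    #{φ : G ≃g G | f ∈ cutOf G (φ '' W)} = #{φ : G ≃g G | e ∈ cutOf G (φ '' W)} := by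
  obtain ⟨ψ, rfl⟩ := ht e he f hf
  exact card_map_mem_cutOf_image W ψ e

end automorphisms

lemma EdgeTransitive.exists_hasCover [Fintype V] {G : SimpleGraph V} (ht : EdgeTransitive G)
    (hG : G.edgeSet.Nonempty) :
    ∃ n k : ℕ, 0 < k ∧ HasCover G n k ∧ k * G.edgeSet.ncard = n * maxCut G := by
  have := Fintype.ofFinite (G ≃g G)
  obtain ⟨W, hW⟩ := exists_ncard_cutOf_eq_maxCut G
  obtain ⟨e₀, he₀⟩ := hG
  set k := #{φ : G ≃g G | e₀ ∈ cutOf G (φ '' W)}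
  have hE := G.edgeSet.toFinite
  have hcount : k * G.edgeSet.ncard = Fintype.card (G ≃g G) * maxCut G :=
    calc k * G.edgeSet.ncard
        = ∑ e ∈ hE.toFinset, #{φ : G ≃g G | e ∈ cutOf G (φ '' W)} := by
          rw [sum_congr rfl fun e he => ht.card_mem_cutOf_image_eq W he₀ (hE.mem_toFinset.1 he),
            sum_const, smul_eq_mul, Set.ncard_eq_toFinset_card _ hE, mul_comm]
      _ = ∑ φ : G ≃g G, (cutOf G (φ '' W)).ncard :=
          (sum_ncard_eq_sum_card_filter_mem hE fun φ => (isCut_cutOf G _).subset_edgeSet).symm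
      _ = Fintype.card (G ≃g G) * maxCut G := by simp [ncard_cutOf_image, hW]
  have hk : 0 < k := pos_of_mul_pos_left
    (hcount ▸ Nat.mul_pos Fintype.card_pos (maxCut_pos G ⟨e₀, he₀⟩)) (Nat.zero_le _)
  exact ⟨_, k, hk, hasCover_of_fintype (fun φ => isCut_cutOf G _)
    fun e he => (ht.card_mem_cutOf_image_eq W he₀ he).ge, hcount⟩

end

/-- If `G` is edge-transitive, then `x(G) = 1/b(G)`. -/
theorem edgeTransitive_cutCover_eq {V : Type*} [Fintype V] (G : SimpleGraph V)
    (hG : G.edgeSet.Nonempty) (ht : EdgeTransitive G) :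
    cutCover G = 1 / bipDensity G := by
  obtain ⟨n, k, hk, hcover, hnk⟩ := ht.exists_hasCover hG
  rw [cutCover_eq_of_hasCover hk hG hcover hnk, bipDensity, one_div_div]
end

section
/- For every k ≥ 1, x(C_{2k+1}) = 1 + 1/(2k). -/
attribute [local instance] Classical.propDecidable

/-!
A cut containing every edge of a graph would be a proper 2-colouring, so each cut of the odd
cycle `C_n` misses at least one of its `n` edges. Double counting the edge–cut incidences of an
`N/k`-cover then gives `k n ≤ N (n - 1)`, hence `x(C_n) ≥ n / (n - 1) = 1 + 1/(2k)` for
`n = 2k + 1`. Conversely, the `n` rotations of the alternating cut `{v | v - i odd}` cover every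
edge exactly `n - 1` times.
-/

open Finset SimpleGraph

theorem Fin.odd_val_add_one_iff {n : ℕ} {x : Fin (n + 1)} (hx : x + 1 ≠ 0) :
    Odd (x + 1).val ↔ ¬Odd x.val := by
  rw [Fin.val_add_one, if_neg (by rintro rfl; exact hx (Fin.last_add_one n)), Nat.odd_add_one]

namespace SimpleGraph

variable {V : Type*} (G : SimpleGraph V)

def edgeBoundary (W : Set V) : Set (Sym2 V) :=
  {e | e ∈ G.edgeSet ∧ ∃ a b, e = s(a, b) ∧ a ∈ W ∧ b ∉ W}

variable {G}

theorem mk_mem_edgeBoundary {W : Set V} {u v : V} :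
    s(u, v) ∈ G.edgeBoundary W ↔ G.Adj u v ∧ (u ∈ W ↔ v ∉ W) := by
  simp only [edgeBoundary, Set.mem_ofPred_eq, mem_edgeSet, Sym2.eq_iff]
  constructor
  · rintro ⟨hadj, a, b, (⟨rfl, rfl⟩ | ⟨rfl, rfl⟩), ha, hb⟩ <;> exact ⟨hadj, by tauto⟩
  · rintro ⟨hadj, hW⟩
    by_cases hu : u ∈ W
    · exact ⟨hadj, u, v, Or.inl ⟨rfl, rfl⟩, hu, hW.1 hu⟩
    · exact ⟨hadj, v, u, Or.inr ⟨rfl, rfl⟩, by tauto, hu⟩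

theorem colorable_two_of_edgeSet_subset_edgeBoundary {W : Set V}
    (h : G.edgeSet ⊆ G.edgeBoundary W) : G.Colorable 2 :=
  (Coloring.mk (fun v => decide (v ∈ W)) fun {u v} hadj => by
    have := (mk_mem_edgeBoundary.1 (h hadj)).2
    simp only [ne_eq, decide_eq_decide]
    tauto).colorable

theorem IsCut.exists_notMem_of_not_colorable {X : Set (Sym2 V)} (hX : IsCut G X)
    (hG : ¬G.Colorable 2) : ∃ e ∈ G.edgeSet, e ∉ X := by
  obtain ⟨W, rfl⟩ := hX
  by_contra! h
  exact hG (colorable_two_of_edgeSet_subset_edgeBoundary h)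

theorem HasCover.mul_card_le {n k c : ℕ} (hcov : HasCover G n k) {S : Finset (Sym2 V)}
    (hS : ∀ e ∈ S, e ∈ G.edgeSet) (hc : ∀ X, IsCut G X → #{e ∈ S | e ∈ X} ≤ c) :
    k * #S ≤ n * c := by
  obtain ⟨X, hcut, hX⟩ := hcov
  calc k * #S = ∑ _e ∈ S, k := by rw [sum_const, smul_eq_mul, mul_comm]
    _ ≤ ∑ e ∈ S, #{i | e ∈ X i} := sum_le_sum fun e he => hX e (hS e he)
    _ = ∑ i, #{e ∈ S | e ∈ X i} := by simp only [card_filter]; exact sum_comm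
    _ ≤ ∑ _i : Fin n, c := sum_le_sum fun i _ => hc _ (hcut i)
    _ = n * c := by simp

theorem HasCover.mul_card_edgeFinset_le_of_not_colorable [Fintype G.edgeSet] {n k : ℕ}
    (hcov : HasCover G n k) (hG : ¬G.Colorable 2) :
    k * #G.edgeFinset ≤ n * (#G.edgeFinset - 1) := by
  refine hcov.mul_card_le (fun e he => mem_edgeFinset.1 he) fun X hX => ?_
  obtain ⟨e, he, heX⟩ := hX.exists_notMem_of_not_colorable hG
  exact Nat.le_sub_one_of_lt <| card_lt_card <| filter_ssubset.2 ⟨e, mem_edgeFinset.2 he, heX⟩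

theorem cutCover_eq_of_hasCover {n k : ℕ} (hk : 0 < k) (hcov : HasCover G n k)
    (hmin : ∀ n' k' : ℕ, 0 < k' → HasCover G n' k' → (n : ℝ) / k ≤ n' / k') :
    cutCover G = n / k := by
  refine le_antisymm (csInf_le ⟨n / k, ?_⟩ ⟨n, k, hk, rfl, hcov⟩)
    (le_csInf ⟨_, n, k, hk, rfl, hcov⟩ ?_) <;>
  · rintro _ ⟨n', k', hk', rfl, hcov'⟩
    exact hmin n' k' hk' hcov'

theorem card_edgeFinset_cycleGraph {n : ℕ} (hn : 3 ≤ n) : #(cycleGraph n).edgeFinset = n := by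
  obtain ⟨m, rfl⟩ : ∃ m, n = m + 3 := ⟨n - 3, by omega⟩
  have := sum_degrees_eq_twice_card_edges (cycleGraph (m + 3))
  simp only [cycleGraph_degree_three_le, sum_const, card_univ, Fintype.card_fin, smul_eq_mul] at this
  omega

theorem not_colorable_two_cycleGraph {n : ℕ} (hn : Odd n) (h3 : 3 ≤ n) :
    ¬(cycleGraph n).Colorable 2 := fun h => by
  have := (chromaticNumber_cycleGraph_of_odd n (by omega) hn).symm.trans_le h.chromaticNumber_le
  norm_num at this

theorem exists_eq_mk_add_one_of_mem_edgeSet_cycleGraph {n : ℕ} {e : Sym2 (Fin (n + 2))}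
    (he : e ∈ (cycleGraph (n + 2)).edgeSet) : ∃ a, e = s(a, a + 1) := by
  induction e using Sym2.ind with
  | _ u v =>
    rcases cycleGraph_adj.1 he with h | h
    · exact ⟨v, by rw [← h, add_sub_cancel, Sym2.eq_swap]⟩
    · exact ⟨u, by rw [← h, add_sub_cancel]⟩

theorem hasCover_cycleGraph (n : ℕ) : HasCover (cycleGraph n) n (n - 1) := by
  refine ⟨fun i => (cycleGraph n).edgeBoundary {v | Odd (v - i).val}, fun i => ⟨_, rfl⟩,
    fun e he => ?_⟩
  obtain _ | _ | m := n
  · induction e using Sym2.ind with | _ u v => exact u.elim0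
  · induction e using Sym2.ind with | _ u v => exact (cycleGraph_one_adj (u := u) (v := v) he).elim
  obtain ⟨a, rfl⟩ := exists_eq_mk_add_one_of_mem_edgeSet_cycleGraph he
  calc m + 2 - 1 = #(univ.erase (a + 1)) := by simp
    _ ≤ _ := card_le_card fun i hi => mem_filter.2 ⟨mem_univ i, ?_⟩
  have hai : a - i + 1 ≠ 0 := by
    rw [sub_add_eq_add_sub, sub_ne_zero]
    exact (mem_erase.1 hi).1.symm
  rw [mk_mem_edgeBoundary, Set.mem_ofPred_eq, Set.mem_ofPred_eq,
    show a + 1 - i = a - i + 1 by abel, Fin.odd_val_add_one_iff hai]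
  exact ⟨he, by tauto⟩

end SimpleGraph

/-- `x(C_{2k+1}) = 1 + 1/(2k)`. -/
theorem cutCover_oddCycle (k : ℕ) (hk : 1 ≤ k) :
    cutCover (SimpleGraph.cycleGraph (2 * k + 1)) = 1 + 1 / (2 * (k : ℝ)) := by
  have hval : ((2 * k + 1 : ℕ) : ℝ) / ((2 * k + 1 - 1 : ℕ) : ℝ) = 1 + 1 / (2 * (k : ℝ)) := by
    push_cast [Nat.add_sub_cancel]
    field_simp
  rw [← hval]
  refine cutCover_eq_of_hasCover (by omega) (hasCover_cycleGraph _) fun n' k' hk' hcov => ?_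
  have h := hcov.mul_card_edgeFinset_le_of_not_colorable
    (not_colorable_two_cycleGraph (odd_two_mul_add_one k) (by omega))
  rw [card_edgeFinset_cycleGraph (by omega)] at h
  rw [div_le_div_iff₀ (Nat.cast_pos.2 (by omega)) (Nat.cast_pos.2 hk'), mul_comm]
  exact_mod_cast h
end

section
/- The fractional cut-covering number of the Petersen graph equals 5/4. -/
attribute [local instance] Classical.propDecidable

/-- The Kneser graph `K(n,k)` on `k`-subsets of `[n]`, with disjointness edges. -/
def kneser (n k : ℕ) : SimpleGraph {s : Finset (Fin n) // s.card = k} :=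
  SimpleGraph.fromRel (fun s t => Disjoint s.1 t.1)

/-!
The five star cuts `{v | i ∈ v}` of `K(5,2)` cut an edge `{A, B}` exactly for the four
`i ∈ A ∪ B`, so they form a `5/4`-cover. Conversely a maximum cut of the Petersen graph has `12`
of its `15` edges (checked over all `2^10` vertex sets), so by double counting `n` cuts covering
every edge `k` times satisfy `15 k ≤ 12 n`.
-/

open Finset

section Cuts

variable {V : Type*} [Fintype V] (G : SimpleGraph V)

theorem card_edgeFinset_filter_crossing (W : Set V) :
    #{e ∈ G.edgeFinset | ∃ a b, e = s(a, b) ∧ a ∈ W ∧ b ∉ W} =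
      #{p : V × V | G.Adj p.1 p.2 ∧ p.1 ∈ W ∧ p.2 ∉ W} := by
  symm
  refine card_nbij (fun p => s(p.1, p.2)) ?_ ?_ ?_
  · rintro ⟨a, b⟩ hp
    simp only [coe_filter, Set.mem_ofPred_eq, mem_univ, true_and] at hp ⊢
    exact ⟨G.mem_edgeFinset.2 hp.1, a, b, rfl, hp.2⟩
  · rintro ⟨a, b⟩ hp ⟨a', b'⟩ hp' heq
    simp only [coe_filter, Set.mem_ofPred_eq, mem_univ, true_and] at hp hp'
    rcases Sym2.eq_iff.1 heq with ⟨rfl, rfl⟩ | ⟨rfl, rfl⟩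
    · rfl
    · exact absurd hp'.2.1 hp.2.2
  · rintro e he
    simp only [coe_filter, Set.mem_ofPred_eq] at he
    obtain ⟨he, a, b, rfl, haW, hbW⟩ := he
    exact ⟨(a, b), by simpa [haW, hbW] using he, rfl⟩

theorem HasCover.mul_card_edgeFinset_le {c n k : ℕ}
    (hcut : ∀ W : Set V, #{p : V × V | G.Adj p.1 p.2 ∧ p.1 ∈ W ∧ p.2 ∉ W} ≤ c)
    (h : HasCover G n k) : #G.edgeFinset * k ≤ n * c := by
  obtain ⟨X, hX, hcov⟩ := h
  have hcard : ∀ i, #{e ∈ G.edgeFinset | e ∈ X i} ≤ c := by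
    intro i
    obtain ⟨W, hW⟩ := hX i
    have hW_le := hcut W
    rw [← card_edgeFinset_filter_crossing G W] at hW_le
    convert hW_le using 3 with e he
    simp [hW, G.mem_edgeFinset.1 he]
  simpa using card_nsmul_le_card_nsmul (fun e i => e ∈ X i)
    (fun e he => hcov e (G.mem_edgeFinset.1 he)) (fun i _ => hcard i)

end Cuts

theorem kneser_adj_iff {n k : ℕ} (hk : 0 < k) {s t : {s : Finset (Fin n) // s.card = k}} :
    (kneser n k).Adj s t ↔ Disjoint s.1 t.1 := by
  simp only [kneser, SimpleGraph.fromRel_adj, disjoint_comm (a := t.1), or_self,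
    and_iff_right_iff_imp]
  rintro hst rfl
  have : s.1.card = 0 := by simpa using hst
  omega

theorem kneser_hasCover_stars (n k : ℕ) : HasCover (kneser n k) n (2 * k) := by
  refine ⟨fun i => {e | e ∈ (kneser n k).edgeSet ∧
    ∃ a b, e = s(a, b) ∧ a ∈ {v | i ∈ v.1} ∧ b ∉ {v | i ∈ v.1}}, fun i => ⟨_, rfl⟩, ?_⟩
  intro e he
  induction e using Sym2.ind with | h s t => ?_
  have hst : Disjoint s.1 t.1 := by
    obtain ⟨-, hst | hts⟩ := he
    exacts [hst, hts.symm]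
  calc 2 * k = #(s.1 ∪ t.1) := by rw [card_union_of_disjoint hst, s.2, t.2, two_mul]
    _ ≤ _ := card_le_card fun i hi => ?_
  simp only [mem_filter, mem_univ, true_and, Set.mem_ofPred_eq]
  refine ⟨he, ?_⟩
  rcases mem_union.1 hi with hs | ht
  · exact ⟨s, t, rfl, hs, disjoint_left.1 hst hs⟩
  · exact ⟨t, s, Sym2.eq_swap, ht, disjoint_right.1 hst ht⟩

theorem petersen_card_edgeFinset : #(kneser 5 2).edgeFinset = 15 := by
  have h := (kneser 5 2).two_mul_card_edgeFinset
  simp only [kneser_adj_iff two_pos] at h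
  have hdisj : #{p : {s : Finset (Fin 5) // s.card = 2} × {s : Finset (Fin 5) // s.card = 2} |
      Disjoint p.1.1 p.2.1} = 30 := by decide
  omega

theorem petersen_card_crossing_le (W : Set {s : Finset (Fin 5) // s.card = 2}) :
    #{p : _ × _ | (kneser 5 2).Adj p.1 p.2 ∧ p.1 ∈ W ∧ p.2 ∉ W} ≤ 12 := by
  have hmaxcut : ∀ f : {s : Finset (Fin 5) // s.card = 2} → Bool,
      #{p : _ × _ | Disjoint p.1.1 p.2.1 ∧ f p.1 = true ∧ f p.2 = false} ≤ 12 := by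
    decide +kernel
  convert hmaxcut (fun v => decide (v ∈ W)) using 3
  simp [kneser_adj_iff two_pos]

/-- The fractional cut-covering number of the Petersen graph `K(5,2)` is `5/4`. -/
theorem cutCover_petersen : cutCover (kneser 5 2) = 5 / 4 := by
  refine IsLeast.csInf_eq ⟨⟨5, 4, by norm_num, by norm_num, kneser_hasCover_stars 5 2⟩, ?_⟩
  rintro _ ⟨n, k, hk, rfl, h⟩
  have hnk := h.mul_card_edgeFinset_le _ petersen_card_crossing_le
  rw [petersen_card_edgeFinset] at hnk
  rw [div_le_div_iff₀ (by norm_num) (by exact_mod_cast hk)]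
  exact_mod_cast (by omega : 5 * k ≤ n * 4)
end

section
/- For every graph G, 1 + 1/(g_o(G) − 1) ≤ x(G) ≤ 2 − 1/⌈χ(G)/2⌉, where g_o(G) is the odd girth and χ(G) the chromatic number. In particular 1 ≤ x(G) < 2. -/
attribute [local instance] Classical.propDecidable

/-!
Lower bound: a cut meets every cycle in an even number of edges, so it contains at most
`g - 1` edges of a shortest odd cycle `C` (of length `g`). If `n` cuts cover every edge `k`
times, double counting the pairs (edge of `C`, cut containing it) gives `g k ≤ n (g - 1)`.

Upper bound: colour `G` with `2 (t + 1)` colours, `t + 1 = ⌈χ / 2⌉`, and take for each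
`(t + 1)`-set `S` of colours the cut leaving the vertices coloured in `S`. An edge whose ends
have colours `a ≠ b` lies in the `2 · C(2t, t)` cuts whose `S` separates `a` from `b`, and
`C(2t + 2, t + 1) / (2 C(2t, t)) = 2 - 1 / (t + 1)`.
-/

open Finset

namespace SimpleGraph

variable {V : Type*} {G : SimpleGraph V}

def cutOf (G : SimpleGraph V) (W : Set V) : Set (Sym2 V) :=
  {e | e ∈ G.edgeSet ∧ ∃ a b, e = s(a, b) ∧ a ∈ W ∧ b ∉ W}

theorem isCut_cutOf (W : Set V) : IsCut G (cutOf G W) := ⟨W, rfl⟩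

theorem mk_mem_cutOf_iff {W : Set V} {a b : V} :
    s(a, b) ∈ cutOf G W ↔ G.Adj a b ∧ Xor (a ∈ W) (b ∈ W) := by
  constructor
  · rintro ⟨hab, a', b', h, ha, hb⟩
    refine ⟨hab, ?_⟩
    rcases Sym2.eq_iff.mp h with ⟨rfl, rfl⟩ | ⟨rfl, rfl⟩
    · exact Or.inl ⟨ha, hb⟩
    · exact Or.inr ⟨ha, hb⟩
  · rintro ⟨hab, ⟨ha, hb⟩ | ⟨hb, ha⟩⟩
    · exact ⟨hab, a, b, rfl, ha, hb⟩
    · exact ⟨hab, b, a, Sym2.eq_swap, hb, ha⟩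

namespace Walk

theorem even_countP_edges_mem_cutOf_iff (W : Set V) {u v : V} (w : G.Walk u v) :
    Even (w.edges.countP (· ∈ cutOf G W)) ↔ (u ∈ W ↔ v ∈ W) := by
  induction w with
  | nil => simp
  | @cons u x v h p ih =>
    rw [edges_cons, List.countP_cons]
    by_cases hux : Xor (u ∈ W) (x ∈ W)
    · simp only [mk_mem_cutOf_iff, h, hux, true_and, decide_true, if_true, Nat.even_add_one, ih]
      rw [xor_iff_not_iff] at hux
      tauto
    · simp only [mk_mem_cutOf_iff, h, hux, true_and, decide_false, Bool.false_eq_true, if_false,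
        add_zero, ih]
      rw [xor_iff_not_iff] at hux
      tauto

theorem IsCycle.card_filter_edges_mem_lt {u : V} {w : G.Walk u u} (hw : w.IsCycle)
    (hodd : Odd w.length) {X : Set (Sym2 V)} (hX : IsCut G X) :
    #{e ∈ w.edges.toFinset | e ∈ X} < w.length := by
  obtain ⟨W, rfl⟩ : ∃ W, X = cutOf G W := hX
  have hcount : #{e ∈ w.edges.toFinset | e ∈ cutOf G W} = w.edges.countP (· ∈ cutOf G W) := by
    rw [List.countP_eq_length_filter, ← List.toFinset_card_of_nodup (hw.edges_nodup.filter _)]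
    congr 1
    ext e
    simp
  have heven := (even_countP_edges_mem_cutOf_iff W w).mpr Iff.rfl
  have hle : w.edges.countP (· ∈ cutOf G W) ≤ w.length := by
    simpa using List.countP_le_length (l := w.edges)
  rw [hcount]
  refine hle.lt_of_ne fun h => ?_
  rw [h] at heven
  exact Nat.not_even_iff_odd.mpr hodd heven

end Walk

end SimpleGraph

theorem Finset.card_filter_mem_notMem_powersetCard_succ {α : Type*} [DecidableEq α]
    {s : Finset α} {a b : α} (ha : a ∈ s) (hb : b ∈ s) (hab : a ≠ b) (t : ℕ) :
    #{S ∈ s.powersetCard (t + 1) | a ∈ S ∧ b ∉ S} = (#s - 2).choose t := by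
  have hcard : #((s.erase b).erase a) = #s - 2 := by
    rw [card_erase_of_mem (mem_erase.mpr ⟨hab, ha⟩), card_erase_of_mem hb]
    omega
  rw [← hcard, ← card_powersetCard]
  refine card_nbij' (·.erase a) (insert a) ?_ ?_ ?_ ?_
  · intro S hS
    simp only [mem_coe, mem_filter, mem_powersetCard] at hS ⊢
    grind
  · intro T hT
    simp only [mem_coe, mem_filter, mem_powersetCard] at hT ⊢
    grind
  · intro S hS
    simp only [mem_coe, mem_filter] at hS
    exact insert_erase hS.2.1
  · intro T hT
    simp only [mem_coe, mem_powersetCard] at hT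
    exact erase_insert fun h => by simpa using hT.1 h

theorem Finset.card_filter_xor_mem_powersetCard_succ {α : Type*} [DecidableEq α]
    {s : Finset α} {a b : α} (ha : a ∈ s) (hb : b ∈ s) (hab : a ≠ b) (t : ℕ) :
    #{S ∈ s.powersetCard (t + 1) | Xor (a ∈ S) (b ∈ S)} = 2 * (#s - 2).choose t := by
  have hsplit : {S ∈ s.powersetCard (t + 1) | Xor (a ∈ S) (b ∈ S)} =
      {S ∈ s.powersetCard (t + 1) | a ∈ S ∧ b ∉ S} ∪
        {S ∈ s.powersetCard (t + 1) | b ∈ S ∧ a ∉ S} := by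
    ext S
    rw [mem_union, mem_filter, mem_filter, mem_filter, Xor]
    tauto
  rw [hsplit, card_union_of_disjoint, card_filter_mem_notMem_powersetCard_succ ha hb hab,
    card_filter_mem_notMem_powersetCard_succ hb ha hab.symm, two_mul]
  exact disjoint_filter.mpr fun _ _ h h' => h.2 h'.1

theorem Nat.cast_centralBinom_succ_div (t : ℕ) :
    ((t + 1).centralBinom : ℝ) / (2 * t.centralBinom : ℕ) = 2 - 1 / (t + 1) := by
  have h := Nat.succ_mul_centralBinom_succ t
  have hpos : (0 : ℝ) < t.centralBinom := by exact_mod_cast t.centralBinom_pos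
  rw [← Nat.cast_inj (R := ℝ)] at h
  push_cast at h ⊢
  field_simp
  linarith

open SimpleGraph

section

variable {V : Type*} {G : SimpleGraph V}

theorem HasCover.length_mul_le {n k : ℕ} (hcov : HasCover G n k) {u : V} {w : G.Walk u u}
    (hw : w.IsCycle) (hodd : Odd w.length) : w.length * k ≤ n * (w.length - 1) := by
  obtain ⟨X, hcut, hcover⟩ := hcov
  have hcard : #w.edges.toFinset = w.length := by
    rw [List.toFinset_card_of_nodup hw.edges_nodup, Walk.length_edges]
  have := card_mul_le_card_mul (fun e i => e ∈ X i) (s := w.edges.toFinset) (t := univ)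
    (m := k) (n := w.length - 1)
    (fun e he => hcover e (w.edges_subset_edgeSet (List.mem_toFinset.mp he)))
    (fun i _ => Nat.le_sub_one_of_lt (hw.card_filter_edges_mem_lt hodd (hcut i)))
  rwa [hcard, card_univ, Fintype.card_fin] at this

theorem HasCover.one_add_inv_le_div {n k : ℕ} (hcov : HasCover G n k) (hk : 0 < k) {u : V}
    {w : G.Walk u u} (hw : w.IsCycle) (hodd : Odd w.length) :
    1 + 1 / ((w.length : ℝ) - 1) ≤ n / k := by
  have hmul := hcov.length_mul_le hw hodd
  have hlen : 3 ≤ w.length := hw.three_le_length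
  have hlenR : (3 : ℝ) ≤ w.length := by exact_mod_cast hlen
  have hkR : (0 : ℝ) < k := by exact_mod_cast hk
  rw [← Nat.cast_le (α := ℝ), Nat.cast_mul, Nat.cast_mul, Nat.cast_pred (by omega)] at hmul
  rw [le_div_iff₀ hkR, one_add_div (by linarith), div_mul_eq_mul_div, div_le_iff₀ (by linarith)]
  linarith

theorem cutCover_le {n k : ℕ} (hk : 0 < k) (hcov : HasCover G n k) : cutCover G ≤ n / k :=
  csInf_le ⟨0, by rintro q ⟨n, k, -, rfl, -⟩; positivity⟩ ⟨n, k, hk, rfl, hcov⟩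

theorem le_cutCover {n k : ℕ} (hk : 0 < k) (hcov : HasCover G n k) {b : ℝ}
    (hb : ∀ n k : ℕ, 0 < k → HasCover G n k → b ≤ n / k) : b ≤ cutCover G :=
  le_csInf ⟨_, n, k, hk, rfl, hcov⟩ <| by rintro q ⟨n, k, hk, rfl, hcov⟩; exact hb n k hk hcov

theorem hasCover_of_finset {β : Type*} (𝒮 : Finset β) (W : β → Set V) {k : ℕ}
    (hW : ∀ u v, G.Adj u v → k ≤ #{S ∈ 𝒮 | Xor (u ∈ W S) (v ∈ W S)}) : HasCover G #𝒮 k := by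
  let σ : Fin #𝒮 ≃ 𝒮 := 𝒮.equivFin.symm
  refine ⟨fun i => G.cutOf (W (σ i)), fun i => isCut_cutOf _, fun e he => ?_⟩
  induction e with
  | _ u v =>
    refine (hW u v he).trans_eq (card_nbij (fun i => (σ i : β)) ?_ ?_ ?_).symm
    · intro i hi
      simp only [coe_filter, mem_univ, true_and, Set.mem_ofPred_eq, mk_mem_cutOf_iff] at hi
      exact mem_filter.mpr ⟨(σ i).2, hi.2⟩
    · exact fun i _ j _ hij => σ.injective (Subtype.ext hij)
    · intro S hS
      simp only [coe_filter, Set.mem_ofPred_eq] at hS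
      refine ⟨σ.symm ⟨S, hS.1⟩, ?_, by simp⟩
      simp [mk_mem_cutOf_iff, G.mem_edgeSet.mp he, hS.2]

theorem SimpleGraph.Colorable.hasCover_centralBinom {t : ℕ} (hG : G.Colorable (2 * (t + 1))) :
    HasCover G (t + 1).centralBinom (2 * t.centralBinom) := by
  obtain ⟨C⟩ := hG
  have hcard : #(univ : Finset (Fin (2 * (t + 1)))) - 2 = 2 * t := by
    rw [card_univ, Fintype.card_fin]; omega
  have := hasCover_of_finset (powersetCard (t + 1) (univ : Finset (Fin (2 * (t + 1)))))
    (fun S => C ⁻¹' S) (k := 2 * t.centralBinom) fun u v huv => by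
      simp only [Set.mem_preimage, mem_coe]
      rw [card_filter_xor_mem_powersetCard_succ (mem_univ _) (mem_univ _) (C.valid huv), hcard,
        Nat.centralBinom]
  rwa [card_powersetCard, card_univ, Fintype.card_fin, ← Nat.centralBinom] at this

end

theorem cutCover_bounds_general {V : Type*} (G : SimpleGraph V) (g c : ℕ)
    (hodd : {n : ℕ | Odd n ∧ ∃ (a : V) (w : G.Walk a a), w.IsCycle ∧ w.length = n}.Nonempty)
    (hg : g = sInf {n : ℕ | Odd n ∧ ∃ (a : V) (w : G.Walk a a), w.IsCycle ∧ w.length = n})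
    (hc : G.chromaticNumber = c) :
    1 + 1 / ((g : ℝ) - 1) ≤ cutCover G ∧
    cutCover G ≤ 2 - 1 / ((⌈(c : ℚ) / 2⌉ : ℤ) : ℝ) ∧
    1 ≤ cutCover G ∧ cutCover G < 2 := by
  obtain ⟨hgodd, a, w, hw, rfl⟩ := hg ▸ Nat.sInf_mem hodd
  have hc0 : c ≠ 0 := by
    rintro rfl
    exact (G.chromaticNumber_eq_zero_iff.mp (by exact_mod_cast hc)).false a
  set t := (c - 1) / 2
  have hceil : ⌈(c : ℚ) / 2⌉ = t + 1 := by
    rw [← Nat.cast_ofNat, Rat.ceil_natCast_div_natCast]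
    omega
  have hcol : G.Colorable (2 * (t + 1)) :=
    (G.chromaticNumber_le_iff_colorable.mp hc.le).mono (by omega)
  have hk : 0 < 2 * t.centralBinom := by have := t.centralBinom_pos; omega
  have hcov := hcol.hasCover_centralBinom
  have hlow : 1 + 1 / ((w.length : ℝ) - 1) ≤ cutCover G :=
    le_cutCover hk hcov fun _ _ hk' hcov' => hcov'.one_add_inv_le_div hk' hw hgodd
  have hup : cutCover G ≤ 2 - 1 / ((t : ℝ) + 1) :=
    (cutCover_le hk hcov).trans_eq (Nat.cast_centralBinom_succ_div t)
  have hg3 : (3 : ℝ) ≤ w.length := by exact_mod_cast hw.three_le_length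
  refine ⟨hlow, by rw [hceil]; push_cast; exact hup, ?_, ?_⟩
  · exact le_trans (le_add_of_nonneg_right (by rw [one_div_nonneg]; linarith)) hlow
  · exact hup.trans_lt (sub_lt_self _ (by positivity))

/-- `1 + 1/(g_o(G)-1) ≤ x(G) ≤ 2 - 1/⌈χ(G)/2⌉`; in particular `1 ≤ x(G) < 2`. -/
theorem cutCover_bounds {V : Type*} [Fintype V] (G : SimpleGraph V)
    (hG : G.edgeSet.Nonempty) (g c : ℕ)
    (hodd : {n : ℕ | Odd n ∧ ∃ (a : V) (w : G.Walk a a), w.IsCycle ∧ w.length = n}.Nonempty)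
    (hg : g = sInf {n : ℕ | Odd n ∧ ∃ (a : V) (w : G.Walk a a), w.IsCycle ∧ w.length = n})
    (hc : G.chromaticNumber = c) :
    1 + 1 / ((g : ℝ) - 1) ≤ cutCover G ∧
    cutCover G ≤ 2 - 1 / ((⌈(c : ℚ) / 2⌉ : ℤ) : ℝ) ∧
    1 ≤ cutCover G ∧ cutCover G < 2 :=
  cutCover_bounds_general G g c hodd hg hc
end

section
/- For every ε > 0 and every integer b there is a graph G with χ_q(G) < 2 + ε and χ(G) > b, where χ_q(G) = 2/(2 − x(G)). -/
attribute [local instance] Classical.propDecidable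

/-!
The witnesses are the Kneser graphs `KG(2k + t, k)`. Each point `i` of the ground set gives the
cut between the `k`-sets containing `i` and the others, and an edge `{A, B}` is cut by the `2k`
points of `A ∪ B`; so `x(KG) ≤ (2k + t) / 2k`, which tends to `1` as `k → ∞`, making `χ_q`
tend to `2`. On the other hand `χ(KG) > t + 1` (Lovász).

Lovász's bound is proved combinatorially, after Matoušek: a proper `(t + 1)`-colouring would give
an antipodal labelling of the nonzero sign vectors on `2k + t` points by integers of absolute
value `< 2k + t` without complementary pair `x ≤ y`, `λ y = -λ x`, which Tucker's lemma forbids.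
Tucker's lemma follows from Ky Fan's parity statement: the maximal chains whose labels, sorted by
absolute value, alternate in sign starting with `+` are odd in number. This is proved by
induction, removing a point `p`: the chains in the hemisphere `x p ≠ -1` are counted through
their facets, and every facet off the equator `x p = 0` lies in exactly two of them.
-/

open Finset

def Alternates : Bool → ℕ → List ℤ → Prop
  | _, _, [] => True
  | pos, m, a :: l => (0 < a ↔ pos) ∧ m < a.natAbs ∧ Alternates (!pos) a.natAbs l

namespace Alternates

variable {pos : Bool} {m : ℕ} {a : ℤ} {l : List ℤ}

lemma cons_iff (hm : m < a.natAbs) (ha : 0 < a ↔ pos) :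
    Alternates pos m (a :: l) ↔ Alternates (!pos) a.natAbs l := by
  simp [Alternates, hm, ha]

lemma not_cons (ha : ¬(0 < a ↔ pos)) : ¬Alternates pos m (a :: l) :=
  fun h => ha h.1

lemma congr_bound {m' : ℕ} (h : ∀ b ∈ l.head?, (m < b.natAbs ↔ m' < b.natAbs)) :
    Alternates pos m l ↔ Alternates pos m' l := by
  cases l with
  | nil => exact Iff.rfl
  | cons b l => simp only [Alternates, h b rfl]

lemma map_neg : ∀ {pos : Bool} {m : ℕ} {l : List ℤ},
    Alternates pos m (l.map (-·)) ↔ Alternates (!pos) m l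
  | _, _, [] => Iff.rfl
  | pos, m, a :: l => by
    simp only [List.map_cons, Alternates, Int.natAbs_neg, Bool.not_not, map_neg]
    constructor <;> rintro ⟨hs, hm, h⟩ <;> refine ⟨?_, hm, h⟩ <;> cases pos <;> simp at hs ⊢ <;>
      omega

lemma exists_le_natAbs : ∀ {pos : Bool} {m : ℕ} {l : List ℤ}, Alternates pos m l → l ≠ [] →
    ∃ a ∈ l, m + l.length ≤ a.natAbs
  | _, _, [], _, h => absurd rfl h
  | _, _, [a], ⟨_, hm, _⟩, _ => ⟨a, by simp, by simp; omega⟩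
  | _, _, a :: b :: l, ⟨_, hm, h⟩, _ => by
    obtain ⟨c, hc, hbig⟩ := exists_le_natAbs h (List.cons_ne_nil b l)
    exact ⟨c, List.mem_cons_of_mem a hc, by simp only [List.length_cons] at hbig ⊢; omega⟩

lemma exists_eq_cons_or_forall_natAbs_lt (hsorted : (a :: l).Pairwise (·.natAbs ≤ ·.natAbs))
    (hcompl : ∀ b ∈ a :: l, ∀ c ∈ a :: l, b.natAbs = c.natAbs → b = c) :
    (∃ rest, l = a :: rest) ∨ ∀ b ∈ l, a.natAbs < b.natAbs := by
  obtain ⟨hal, hsorted⟩ := List.pairwise_cons.1 hsorted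
  rcases l with _ | ⟨b, rest⟩
  · simp
  rcases (hal b List.mem_cons_self).lt_or_eq with h | h
  · refine Or.inr fun c hc => h.trans_le ?_
    rcases List.mem_cons.1 hc with rfl | hc
    exacts [le_rfl, List.rel_of_pairwise_cons hsorted hc]
  · obtain rfl := hcompl b (List.mem_cons_of_mem a List.mem_cons_self) a List.mem_cons_self h.symm
    exact Or.inl ⟨rest, rfl⟩

theorem sum_eraseIdx_modEq (l : List ℤ) (pos : Bool) (m : ℕ)
    (hsorted : l.Pairwise (·.natAbs ≤ ·.natAbs))
    (hcompl : ∀ a ∈ l, ∀ b ∈ l, a.natAbs = b.natAbs → a = b) (hm : ∀ a ∈ l, m < a.natAbs) :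
    ∑ i ∈ range l.length, (if Alternates pos m (l.eraseIdx i) then 1 else 0) ≡
      (if Alternates pos m l then 1 else 0) + (if Alternates (!pos) m l then 1 else 0) [MOD 2] := by
  induction l generalizing pos m with
  | nil => simp [Alternates, Nat.ModEq]
  | cons a l ih =>
    have hma : m < a.natAbs := hm a List.mem_cons_self
    have htail := exists_eq_cons_or_forall_natAbs_lt hsorted hcompl
    have hcongr (hlt : ∀ b ∈ l, a.natAbs < b.natAbs) :
        Alternates pos m l ↔ Alternates pos a.natAbs l :=
      congr_bound fun b hb => by have := hlt b (List.mem_of_mem_head? hb); omega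
    rw [List.length_cons, sum_range_succ']
    simp only [List.eraseIdx_cons_succ, List.eraseIdx_cons_zero]
    by_cases ha : 0 < a ↔ pos
    · have ha' : ¬(0 < a ↔ !pos) := by cases pos <;> simp_all
      simp only [cons_iff hma ha, not_cons ha', if_false, add_zero]
      rcases htail with ⟨rest, rfl⟩ | hlt
      · -- with `a` repeated, erasing either copy leaves the same list
        simp only [List.length_cons, sum_range_succ', List.eraseIdx_cons_succ,
          List.eraseIdx_cons_zero, not_cons ha', if_false, sum_const_zero, zero_add,
          cons_iff hma ha]
        by_cases h : Alternates (!pos) a.natAbs rest <;> simp [h, Nat.ModEq]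
      · have := ih (!pos) a.natAbs (List.pairwise_cons.1 hsorted).2
          (fun b hb c hc => hcompl b (List.mem_cons_of_mem a hb) c (List.mem_cons_of_mem a hc)) hlt
        simp only [Bool.not_not, hcongr hlt] at this ⊢
        unfold Nat.ModEq at this ⊢
        by_cases hp : Alternates pos a.natAbs l <;> by_cases hn : Alternates (!pos) a.natAbs l <;>
          simp only [hp, hn, if_true, if_false] at this ⊢ <;> omega
    · have ha' : 0 < a ↔ !pos := by cases pos <;> simp_all
      simp only [not_cons ha, if_false, sum_const_zero, zero_add, cons_iff hma ha', Bool.not_not]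
      have : Alternates pos m l ↔ Alternates pos a.natAbs l := by
        rcases htail with ⟨rest, rfl⟩ | hlt
        · simp [not_cons ha]
        · exact hcongr hlt
      simp only [this]
      rfl

end Alternates

def AbsLE (a b : ℤ) : Prop := a.natAbs < b.natAbs ∨ a.natAbs = b.natAbs ∧ a ≤ b

instance : IsTrans ℤ AbsLE := ⟨fun _ _ _ => by unfold AbsLE; omega⟩
instance : Std.Antisymm AbsLE := ⟨fun _ _ => by unfold AbsLE; omega⟩
instance : Std.Total AbsLE := ⟨fun _ _ => by unfold AbsLE; omega⟩

lemma sort_coe_absLE {l : List ℤ} (h : l.Pairwise AbsLE) :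
    Multiset.sort (l : Multiset ℤ) AbsLE = l := by
  rw [Multiset.coe_sort]
  exact List.mergeSort_eq_self _ h

lemma Finset.card_filter_supersets_card_succ {β : Type*} [Fintype β] (γ : Finset β)
    (P : Finset β → Prop) :
    #{σ | γ ⊆ σ ∧ #σ = #γ + 1 ∧ P σ} = #{z | z ∉ γ ∧ P (insert z γ)} := by
  symm
  refine card_bij (fun z _ => insert z γ) (fun z hz => ?_) (fun z hz z' _ h => ?_) fun σ hσ => ?_
  · simp only [mem_filter, mem_univ, true_and] at hz ⊢
    exact ⟨subset_insert z γ, card_insert_of_notMem hz.1, hz.2⟩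
  · exact (insert_inj (mem_filter.1 hz).2.1).1 h
  · simp only [mem_filter, mem_univ, true_and] at hσ ⊢
    obtain ⟨z, hz, rfl⟩ := exists_eq_insert_iff.2 ⟨hσ.1, hσ.2.1.symm⟩
    exact ⟨z, ⟨hz, hσ.2.2⟩, rfl⟩

lemma Finset.sum_card_filter_erase {β : Type*} [Fintype β] (F : Finset (Finset β))
    (P : Finset β → Prop) :
    ∑ σ ∈ F, #{x ∈ σ | P (σ.erase x)} = ∑ γ with P γ, #{σ ∈ F | γ ⊆ σ ∧ #σ = #γ + 1} := by
  have hfacets : ∀ σ ∈ F, #{x ∈ σ | P (σ.erase x)} = #{γ | P γ ∧ γ ⊆ σ ∧ #σ = #γ + 1} :=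
    fun σ _ => by
    refine card_bij (fun x _ => σ.erase x) (fun x hx => ?_) (fun x hx y hy h => ?_) fun γ hγ => ?_
    · obtain ⟨hx, hP⟩ := mem_filter.1 hx
      simp only [mem_filter, mem_univ, true_and]
      exact ⟨hP, erase_subset x σ, (card_erase_add_one hx).symm⟩
    · exact (erase_inj σ (mem_filter.1 hx).1).1 h
    · simp only [mem_filter, mem_univ, true_and] at hγ
      obtain ⟨x, hx, rfl⟩ := exists_eq_insert_iff.2 ⟨hγ.2.1, hγ.2.2.symm⟩
      exact ⟨x, mem_filter.2 ⟨mem_insert_self x γ, by rw [erase_insert hx]; exact hγ.1⟩,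
        erase_insert hx⟩
  have := sum_card_bipartiteAbove_eq_sum_card_bipartiteBelow (s := F)
    (t := ({γ | P γ} : Finset (Finset β))) (fun σ γ => γ ⊆ σ ∧ #σ = #γ + 1)
  simp only [bipartiteAbove, bipartiteBelow, filter_filter] at this
  rw [sum_congr rfl hfacets]
  convert this using 3

noncomputable def chooseSubset {α : Type*} (k : ℕ) (A : Finset α) : Finset α :=
  if h : k ≤ #A then (exists_subset_card_eq h).choose else ∅

lemma chooseSubset_subset {α : Type*} (k : ℕ) (A : Finset α) : chooseSubset k A ⊆ A := by
  unfold chooseSubset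
  split_ifs with h
  exacts [(exists_subset_card_eq h).choose_spec.1, empty_subset A]

lemma card_chooseSubset {α : Type*} {k : ℕ} {A : Finset α} (h : k ≤ #A) :
    #(chooseSubset k A) = k := by
  rw [chooseSubset, dif_pos h]
  exact (exists_subset_card_eq h).choose_spec.2

/-- Sign vectors with the face order of the cross-polytope: `x ≤ y` iff `y` extends `x`. -/
def SignVector (α : Type*) := α → SignType

namespace SignVector

open scoped Pointwise

variable {α : Type*} {x y z : SignVector α} {a : α}

instance : Zero (SignVector α) := inferInstanceAs (Zero (α → SignType))
instance : InvolutiveNeg (SignVector α) := inferInstanceAs (InvolutiveNeg (α → SignType))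
instance [Fintype α] [DecidableEq α] : Fintype (SignVector α) :=
  inferInstanceAs (Fintype (α → SignType))

instance : PartialOrder (SignVector α) where
  le x y := ∀ a, x a ≠ 0 → y a = x a
  le_refl _ _ _ := rfl
  le_trans _ _ _ hxy hyz a ha := (hyz a (hxy a ha ▸ ha)).trans (hxy a ha)
  le_antisymm x y hxy hyx := funext fun a => by
    by_cases ha : x a = 0
    · by_contra h
      exact h (hyx a (Ne.symm (ha ▸ h)))
    · exact (hxy a ha).symm

section Order

@[simp] lemma zero_apply (a : α) : (0 : SignVector α) a = 0 := rfl

@[simp] lemma neg_apply (x : SignVector α) (a : α) : (-x) a = -x a := rfl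

lemma zero_le (x : SignVector α) : 0 ≤ x := fun _ h => absurd rfl h

lemma neg_le_neg (h : x ≤ y) : -x ≤ -y := fun a ha => by
  have : x a ≠ 0 := fun h0 => ha (by simp [h0])
  simp [h a this]

lemma finset_neg_neg (σ : Finset (SignVector α)) : -(-σ) = σ := by
  ext; simp [mem_neg']

def update [DecidableEq α] (x : SignVector α) (a : α) (s : SignType) : SignVector α :=
  Function.update x a s

variable [DecidableEq α] {s : SignType}

@[simp] lemma update_apply_self : x.update a s a = s := Function.update_self ..

lemma update_apply_of_ne {b : α} (h : b ≠ a) : x.update a s b = x b := Function.update_of_ne h ..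

lemma le_update (ha : x a = 0) (s : SignType) : x ≤ x.update a s := fun _ hb =>
  update_apply_of_ne fun h => hb (h ▸ ha)

lemma update_le (h : x ≤ y) : x.update a (y a) ≤ y := fun b hb => by
  by_cases hba : b = a
  · subst hba; simp
  · rw [update_apply_of_ne hba] at hb ⊢; exact h b hb

lemma card_filter_update_ne_neg_one {p q : α} (hxp : x p ≠ -1) :
    #{z ∈ ({x.update q 1, x.update q (-1)} : Finset (SignVector α)) | z p ≠ -1} =
      if q = p then 1 else 2 := by
  have hne : x.update q 1 ≠ x.update q (-1) := fun h => by
    simpa using congrArg (· q) h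
  split_ifs with hqp
  · subst hqp
    rw [card_eq_one]
    refine ⟨x.update q 1, ext fun z => ?_⟩
    simp only [mem_filter, mem_insert, mem_singleton]
    constructor
    · rintro ⟨rfl | rfl, h⟩
      exacts [rfl, absurd update_apply_self h]
    · rintro rfl
      exact ⟨Or.inl rfl, by simp⟩
  · rw [filter_true_of_mem fun z hz => ?_, card_pair hne]
    rcases mem_insert.1 hz with rfl | hz
    · rwa [update_apply_of_ne (Ne.symm hqp)]
    · rw [mem_singleton.1 hz, update_apply_of_ne (Ne.symm hqp)]; exact hxp

end Order

section Support

variable [Fintype α]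

noncomputable def supp (x : SignVector α) : Finset α := {a | x a ≠ 0}

@[simp] lemma mem_supp : a ∈ x.supp ↔ x a ≠ 0 := by simp [supp]

@[simp] lemma supp_neg (x : SignVector α) : (-x).supp = x.supp := by ext; simp

@[simp] lemma supp_zero : (0 : SignVector α).supp = ∅ := by ext; simp

lemma supp_eq_empty : x.supp = ∅ ↔ x = 0 :=
  ⟨fun h => funext fun a => by simpa using Finset.eq_empty_iff_forall_notMem.1 h a,
    fun h => h ▸ supp_zero⟩

lemma supp_mono (h : x ≤ y) : x.supp ⊆ y.supp := fun a ha => by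
  rw [mem_supp] at ha ⊢; rw [h a ha]; exact ha

lemma eq_of_le_of_card_supp_le (h : x ≤ y) (hc : #y.supp ≤ #x.supp) : x = y := by
  have hs := Finset.eq_of_subset_of_card_le (supp_mono h) hc
  refine le_antisymm h fun a ha => ?_
  have : x a ≠ 0 := mem_supp.1 (hs ▸ mem_supp.2 ha)
  exact (h a this).symm

variable [DecidableEq α] {s : SignType}

lemma supp_update (ha : x a = 0) (hs : s ≠ 0) : (x.update a s).supp = insert a x.supp := by
  ext b
  by_cases hb : b = a
  · subst hb; simp [hs]
  · simp [update_apply_of_ne hb, hb]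

lemma eq_update_of_le (h : x ≤ z) (hz : z.supp = insert a x.supp) : z = x.update a (z a) := by
  refine funext fun b => ?_
  by_cases hba : b = a
  · subst hba; exact update_apply_self.symm
  · rw [update_apply_of_ne hba]
    by_cases hb : x b = 0
    · have : b ∉ z.supp := by simp [hz, hba, hb]
      simpa [hb] using this
    · exact h b hb

/-- The covers of `x` below `y` are obtained by extending `x` at one point of `y.supp \ x.supp`. -/
lemma card_covers_between (hxy : x ≤ y) :
    #{z | x ≤ z ∧ z ≤ y ∧ #z.supp = #x.supp + 1} = #y.supp - #x.supp := by
  rw [← card_sdiff_of_subset (supp_mono hxy)]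
  symm
  refine card_bij (fun w _ => x.update w (y w)) (fun w hw => ?_) (fun w₁ hw₁ w₂ hw₂ h => ?_)
    (fun z hz => ?_)
  · simp only [mem_sdiff, mem_supp, not_not] at hw
    simp only [mem_filter, mem_univ, true_and]
    refine ⟨le_update hw.2 _, update_le hxy, ?_⟩
    rw [supp_update hw.2 hw.1, card_insert_of_notMem (by simpa using hw.2)]
  · simp only [mem_sdiff, mem_supp, not_not] at hw₁
    by_contra hne
    have := congrFun h w₁
    rw [update_apply_self, update_apply_of_ne hne] at this
    exact hw₁.1 (this.trans hw₁.2)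
  · simp only [mem_filter, mem_univ, true_and] at hz
    obtain ⟨hxz, hzy, hcard⟩ := hz
    obtain ⟨w, hw, hins⟩ := exists_eq_insert_iff.2 ⟨supp_mono hxz, hcard.symm⟩
    have hwz : w ∈ z.supp := hins ▸ mem_insert_self w _
    refine ⟨w, mem_sdiff.2 ⟨supp_mono hzy hwz, hw⟩, ?_⟩
    rw [eq_update_of_le hxz hins.symm, hzy w (mem_supp.1 hwz)]

lemma filter_supp_eq_insert (hq : x a = 0) :
    ({z | x ≤ z ∧ z.supp = insert a x.supp} : Finset (SignVector α)) =
      {x.update a 1, x.update a (-1)} := by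
  ext z
  simp only [mem_filter, mem_univ, true_and, mem_insert, mem_singleton]
  constructor
  · rintro ⟨hxz, hz⟩
    have hza : z a ≠ 0 := mem_supp.1 (hz ▸ mem_insert_self a _)
    rw [eq_update_of_le hxz hz]
    have : z a = 1 ∨ z a = -1 := by revert hza; cases z a <;> decide
    rcases this with h | h <;> simp [h]
  · rintro (rfl | rfl) <;> exact ⟨le_update hq _, supp_update hq (by decide)⟩

end Support
section Chains

variable [Fintype α]

def IsNonzeroOn (U : Finset α) (x : SignVector α) : Prop := x ≠ 0 ∧ x.supp ⊆ U

/-- The simplices of the barycentric subdivision of the boundary of the cross-polytope on `U`. -/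
def IsChainOn (U : Finset α) (σ : Finset (SignVector α)) : Prop :=
  (∀ x ∈ σ, IsNonzeroOn U x) ∧ IsChain (· ≤ ·) (σ : Set (SignVector α))

lemma IsNonzeroOn.card_supp_pos {U : Finset α} (hx : IsNonzeroOn U x) : 0 < #x.supp :=
  card_pos.2 (nonempty_iff_ne_empty.2 fun h => hx.1 (supp_eq_empty.1 h))

lemma le_of_isChain_of_card_supp_le {s : Set (SignVector α)} (hs : IsChain (· ≤ ·) s)
    (hx : x ∈ s) (hy : y ∈ s) (h : #x.supp ≤ #y.supp) : x ≤ y :=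
  (hs.total hx hy).elim id fun hyx => (eq_of_le_of_card_supp_le hyx h).ge

namespace IsChainOn

variable {U : Finset α} {σ τ : Finset (SignVector α)}

lemma total (hσ : IsChainOn U σ) (hx : x ∈ σ) (hy : y ∈ σ) : x ≤ y ∨ y ≤ x :=
  hσ.2.total hx hy

lemma le_of_card_supp_le (hσ : IsChainOn U σ) (hx : x ∈ σ) (hy : y ∈ σ)
    (h : #x.supp ≤ #y.supp) : x ≤ y :=
  le_of_isChain_of_card_supp_le hσ.2 hx hy h

lemma eq_of_card_supp_eq (hσ : IsChainOn U σ) (hx : x ∈ σ) (hy : y ∈ σ)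
    (h : #x.supp = #y.supp) : x = y :=
  le_antisymm (hσ.le_of_card_supp_le hx hy h.le) (hσ.le_of_card_supp_le hy hx h.ge)

lemma card_supp_mem_Icc (hσ : IsChainOn U σ) (hx : x ∈ σ) : #x.supp ∈ Icc 1 #U :=
  mem_Icc.2 ⟨(hσ.1 x hx).card_supp_pos, card_le_card (hσ.1 x hx).2⟩

lemma card_image_card_supp (hσ : IsChainOn U σ) : #(σ.image (#·.supp)) = #σ :=
  card_image_of_injOn fun _ hx _ hy h => hσ.eq_of_card_supp_eq hx hy h

lemma apply_eq (hσ : IsChainOn U σ) (hx : x ∈ σ) (hy : y ∈ σ) (hxa : x a ≠ 0) (hya : y a ≠ 0) :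
    x a = y a :=
  (hσ.total hx hy).elim (fun h => (h a hxa).symm) fun h => h a hya

lemma subset (hσ : IsChainOn U σ) (h : τ ⊆ σ) : IsChainOn U τ :=
  ⟨fun x hx => hσ.1 x (h hx), hσ.2.mono (coe_subset.2 h)⟩

lemma neg (hσ : IsChainOn U σ) : IsChainOn U (-σ) := by
  refine ⟨fun x hx => ?_, fun x hx y hy hxy => ?_⟩
  · obtain ⟨hx0, hxU⟩ := hσ.1 (-x) (mem_neg'.1 hx)
    exact ⟨fun h => hx0 (by subst h; exact funext fun _ => rfl), by simpa using hxU⟩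
  · rw [coe_neg, Set.mem_neg] at hx hy
    rcases hσ.total hx hy with h | h
    exacts [Or.inl (by simpa using neg_le_neg h), Or.inr (by simpa using neg_le_neg h)]

lemma insert_of_forall (hσ : IsChainOn U σ) (hz : IsNonzeroOn U z)
    (hcomp : ∀ y ∈ σ, z ≤ y ∨ y ≤ z) : IsChainOn U (insert z σ) := by
  refine ⟨fun x hx => ?_, ?_⟩
  · rcases mem_insert.1 hx with rfl | hx
    exacts [hz, hσ.1 x hx]
  · rw [coe_insert]
    exact hσ.2.insert fun y hy _ => hcomp y hy

lemma exists_supp_eq (hσ : IsChainOn U σ) (hcard : #σ = #U) (hU : U.Nonempty) :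
    ∃ x ∈ σ, x.supp = U := by
  have himage : σ.image (#·.supp) = Icc 1 #U :=
    eq_of_subset_of_card_le (fun _ h => by
      obtain ⟨x, hx, rfl⟩ := mem_image.1 h; exact hσ.card_supp_mem_Icc hx)
      (by rw [hσ.card_image_card_supp, hcard, Nat.card_Icc]; omega)
  obtain ⟨x, hx, hxU⟩ := mem_image.1 (himage ▸ mem_Icc.2 ⟨card_pos.2 hU, le_rfl⟩ :
    #U ∈ σ.image (#·.supp))
  exact ⟨x, hx, eq_of_subset_of_card_le (hσ.1 x hx).2 hxU.ge⟩

end IsChainOn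

lemma isChainOn_erase_iff {U : Finset α} {σ : Finset (SignVector α)} :
    IsChainOn (U.erase a) σ ↔ IsChainOn U σ ∧ ∀ x ∈ σ, x a = 0 := by
  simp only [IsChainOn, IsNonzeroOn, subset_erase, mem_supp, not_not]
  constructor
  · rintro ⟨h, hc⟩; exact ⟨⟨fun x hx => ⟨(h x hx).1, (h x hx).2.1⟩, hc⟩, fun x hx => (h x hx).2.2⟩
  · rintro ⟨⟨h, hc⟩, h0⟩; exact ⟨fun x hx => ⟨(h x hx).1, (h x hx).2, h0 x hx⟩, hc⟩

end Chains

section Labels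

variable {lam : SignVector α → ℤ} {σ : Finset (SignVector α)}

noncomputable def labels (lam : SignVector α → ℤ) (σ : Finset (SignVector α)) : List ℤ :=
  (σ.val.map lam).sort AbsLE

def IsAlternating (lam : SignVector α → ℤ) (pos : Bool) (σ : Finset (SignVector α)) : Prop :=
  Alternates pos 0 (labels lam σ)

lemma coe_labels (lam : SignVector α → ℤ) (σ : Finset (SignVector α)) :
    (labels lam σ : Multiset ℤ) = σ.val.map lam :=
  Multiset.sort_eq _ _

lemma labels_pairwise (lam : SignVector α → ℤ) (σ : Finset (SignVector α)) :
    (labels lam σ).Pairwise AbsLE :=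
  Multiset.pairwise_sort _ _

lemma length_labels (lam : SignVector α → ℤ) (σ : Finset (SignVector α)) :
    (labels lam σ).length = #σ := by
  simpa using congrArg Multiset.card (coe_labels lam σ)

lemma mem_labels {b : ℤ} : b ∈ labels lam σ ↔ ∃ x ∈ σ, lam x = b := by
  rw [← Multiset.mem_coe, coe_labels, Multiset.mem_map]
  rfl

lemma labels_erase {x : SignVector α} (hx : x ∈ σ) :
    labels lam (σ.erase x) = ((σ.val.map lam).erase (lam x)).sort AbsLE := by
  rw [labels, erase_val, Multiset.map_erase_of_mem _ _ hx]

lemma card_filter_erase_eq_sum_eraseIdx (P : List ℤ → Prop) :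
    #{x ∈ σ | P (labels lam (σ.erase x))} =
      ∑ i ∈ range (labels lam σ).length, if P ((labels lam σ).eraseIdx i) then 1 else 0 := by
  set L := labels lam σ
  set F : ℤ → ℕ := fun b => if P (((σ.val.map lam).erase b).sort AbsLE) then 1 else 0
  have hL : σ.val.map lam = L := (coe_labels lam σ).symm
  calc #{x ∈ σ | P (labels lam (σ.erase x))}
      = ((σ.val.map lam).map F).sum := by
        rw [card_filter, Multiset.map_map, sum_map_val]
        exact sum_congr rfl fun x hx => by rw [labels_erase hx]; rfl
    _ = ∑ i : Fin L.length, F L[(i : ℕ)] := by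
        rw [hL, Multiset.map_coe, Multiset.sum_coe, ← Fin.sum_univ_fun_getElem]
    _ = _ := by
        rw [sum_range]
        refine sum_congr rfl fun i _ => ?_
        simp only [F, hL]
        rw [Multiset.coe_erase, Multiset.coe_eq_coe.2 (List.erase_getElem i.2),
          sort_coe_absLE ((labels_pairwise lam σ).sublist (List.eraseIdx_sublist _ _))]

end Labels

section Tucker

variable [Fintype α] {U V : Finset α} {lam : SignVector α → ℤ} {σ : Finset (SignVector α)}

structure IsTuckerLabeling (U : Finset α) (lam : SignVector α → ℤ) : Prop where
  map_neg : ∀ x, IsNonzeroOn U x → lam (-x) = -lam x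
  ne_neg_of_le : ∀ x y, IsNonzeroOn U x → IsNonzeroOn U y → x ≤ y → lam y ≠ -lam x

namespace IsTuckerLabeling

lemma mono (h : IsTuckerLabeling V lam) (hUV : U ⊆ V) : IsTuckerLabeling U lam where
  map_neg x hx := h.map_neg x ⟨hx.1, hx.2.trans hUV⟩
  ne_neg_of_le x y hx hy := h.ne_neg_of_le x y ⟨hx.1, hx.2.trans hUV⟩ ⟨hy.1, hy.2.trans hUV⟩

lemma natAbs_pos (h : IsTuckerLabeling U lam) (hx : IsNonzeroOn U x) : 0 < (lam x).natAbs := by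
  have := h.ne_neg_of_le x x hx hx le_rfl
  omega

lemma eq_of_natAbs_eq (h : IsTuckerLabeling U lam) (hσ : IsChainOn U σ) (hx : x ∈ σ) (hy : y ∈ σ)
    (habs : (lam x).natAbs = (lam y).natAbs) : lam x = lam y := by
  rcases Int.natAbs_eq_natAbs_iff.1 habs with h' | h'
  · exact h'
  rcases hσ.total hx hy with hxy | hyx
  · exact absurd (by omega) (h.ne_neg_of_le x y (hσ.1 x hx) (hσ.1 y hy) hxy)
  · exact absurd (by omega) (h.ne_neg_of_le y x (hσ.1 y hy) (hσ.1 x hx) hyx)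

lemma labels_neg (h : IsTuckerLabeling U lam) (hσ : IsChainOn U σ) :
    labels lam (-σ) = (labels lam σ).map (-·) := by
  have hval : (-σ).val.map lam = ((labels lam σ).map (-·) : List ℤ) := by
    rw [Finset.neg_def, image_val_of_injOn neg_injective.injOn, Multiset.map_map,
      ← Multiset.map_coe, coe_labels, Multiset.map_map]
    exact Multiset.map_congr rfl fun x hx => h.map_neg x (hσ.1 x hx)
  rw [labels, hval, sort_coe_absLE]
  refine List.pairwise_map.2 ((labels_pairwise lam σ).imp_of_mem fun ha hb hab => ?_)
  obtain ⟨x, hx, rfl⟩ := mem_labels.1 ha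
  obtain ⟨y, hy, rfl⟩ := mem_labels.1 hb
  have := h.eq_of_natAbs_eq hσ hx hy
  unfold AbsLE at hab ⊢
  omega

lemma isAlternating_neg (h : IsTuckerLabeling U lam) (hσ : IsChainOn U σ) (pos : Bool) :
    IsAlternating lam pos (-σ) ↔ IsAlternating lam (!pos) σ := by
  rw [IsAlternating, IsAlternating, h.labels_neg hσ, Alternates.map_neg]

lemma card_filter_isAlternating_erase_modEq (h : IsTuckerLabeling U lam) (hσ : IsChainOn U σ) :
    #{x ∈ σ | IsAlternating lam true (σ.erase x)} ≡
      (if IsAlternating lam true σ then 1 else 0) +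
        (if IsAlternating lam false σ then 1 else 0) [MOD 2] := by
  unfold IsAlternating
  rw [card_filter_erase_eq_sum_eraseIdx (Alternates true 0)]
  refine Alternates.sum_eraseIdx_modEq _ true 0
    ((labels_pairwise lam σ).imp fun hab => by unfold AbsLE at hab; omega)
    (fun a ha b hb habs => ?_) fun a ha => ?_
  · obtain ⟨x, hx, rfl⟩ := mem_labels.1 ha
    obtain ⟨y, hy, rfl⟩ := mem_labels.1 hb
    exact h.eq_of_natAbs_eq hσ hx hy habs
  · obtain ⟨x, hx, rfl⟩ := mem_labels.1 ha
    exact h.natAbs_pos (hσ.1 x hx)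

end IsTuckerLabeling

end Tucker

section Completions

variable [Fintype α] {U : Finset α} {γ : Finset (SignVector α)} {lo : SignVector α} {p : α} {d : ℕ}

namespace IsChainOn

lemma exists_missing_card (hγ : IsChainOn U γ) (hcard : #γ + 1 = #U) :
    ∃ d ∈ Icc 1 #U, ∀ e ∈ Icc 1 #U, e ∈ γ.image (#·.supp) ↔ e ≠ d := by
  have hsub : γ.image (#·.supp) ⊆ Icc 1 #U := fun _ h => by
    obtain ⟨x, hx, rfl⟩ := mem_image.1 h; exact hγ.card_supp_mem_Icc hx
  obtain ⟨d, hd⟩ := card_eq_one.1 (by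
    rw [card_sdiff_of_subset hsub, hγ.card_image_card_supp, Nat.card_Icc]; omega :
    #(Icc 1 #U \ γ.image (#·.supp)) = 1)
  have hmem : ∀ e, e ∈ Icc 1 #U \ γ.image (#·.supp) ↔ e = d := by simp [hd]
  refine ⟨d, (mem_sdiff.1 ((hmem d).2 rfl)).1, fun e he => ?_⟩
  have := hmem e
  rw [mem_sdiff] at this
  tauto

lemma isChain_insert_zero (hγ : IsChainOn U γ) :
    IsChain (· ≤ ·) ((insert 0 γ : Finset (SignVector α)) : Set (SignVector α)) := by
  rw [coe_insert]
  exact hγ.2.insert fun y _ _ => Or.inl (zero_le y)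

lemma insert_iff (hγ : IsChainOn U γ) (hd1 : 1 ≤ d)
    (hd : ∀ e ∈ Icc 1 #U, e ∈ γ.image (#·.supp) ↔ e ≠ d) (hlo : lo ∈ insert 0 γ)
    (hlod : #lo.supp + 1 = d) :
    z ∉ γ ∧ IsChainOn U (insert z γ) ↔
      z.supp ⊆ U ∧ #z.supp = d ∧ lo ≤ z ∧ ∀ y ∈ γ, d < #y.supp → z ≤ y := by
  constructor
  · rintro ⟨hzγ, hc⟩
    have hz := mem_insert_self z γ
    have hzd : #z.supp = d := by
      by_contra hne
      obtain ⟨y, hy, hyz⟩ := mem_image.1 ((hd _ (hc.card_supp_mem_Icc hz)).2 hne)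
      exact hzγ (hc.eq_of_card_supp_eq hz (mem_insert_of_mem hy) hyz.symm ▸ hy)
    refine ⟨(hc.1 z hz).2, hzd, ?_, fun y hy hdy =>
      hc.le_of_card_supp_le hz (mem_insert_of_mem hy) (by omega)⟩
    have hsub : insert 0 γ ⊆ insert 0 (insert z γ) := insert_subset_insert 0 (subset_insert z γ)
    exact le_of_isChain_of_card_supp_le hc.isChain_insert_zero (hsub hlo)
      (mem_insert_of_mem hz) (by omega)
  · rintro ⟨hzU, hzd, hloz, hup⟩
    have hdU : d ≤ #U := hzd ▸ card_le_card hzU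
    have hsize : ∀ y ∈ γ, #y.supp ≠ d := fun y hy =>
      (hd _ (hγ.card_supp_mem_Icc hy)).1 (mem_image_of_mem _ hy)
    refine ⟨fun hzγ => hsize z hzγ hzd, hγ.insert_of_forall ⟨fun h0 => ?_, hzU⟩ fun y hy => ?_⟩
    · rw [h0, supp_zero, card_empty] at hzd; omega
    rcases (hsize y hy).lt_or_gt with hlt | hgt
    · exact Or.inr ((le_of_isChain_of_card_supp_le hγ.isChain_insert_zero
        (mem_insert_of_mem hy) hlo (by omega)).trans hloz)
    · exact Or.inl (hup y hy hgt)

lemma card_hemisphere_supersets (hγ : IsChainOn U γ) (hcard : #γ + 1 = #U)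
    (hhem : ∀ x ∈ γ, x p ≠ -1) (hd1 : 1 ≤ d)
    (hd : ∀ e ∈ Icc 1 #U, e ∈ γ.image (#·.supp) ↔ e ≠ d) (hlo : lo ∈ insert 0 γ)
    (hlod : #lo.supp + 1 = d) :
    #{σ | IsChainOn U σ ∧ #σ = #U ∧ (∀ x ∈ σ, x p ≠ -1) ∧ γ ⊆ σ} =
      #{z | (z.supp ⊆ U ∧ #z.supp = d ∧ lo ≤ z ∧ ∀ y ∈ γ, d < #y.supp → z ≤ y) ∧ z p ≠ -1} :=
  calc _ = #{σ | γ ⊆ σ ∧ #σ = #γ + 1 ∧ (IsChainOn U σ ∧ ∀ x ∈ σ, x p ≠ -1)} := by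
        congr 1; ext σ; simp only [mem_filter, mem_univ, true_and, hcard]; tauto
    _ = #{z | z ∉ γ ∧ (IsChainOn U (insert z γ) ∧ ∀ x ∈ insert z γ, x p ≠ -1)} := by
        convert Finset.card_filter_supersets_card_succ γ
          fun σ => IsChainOn U σ ∧ ∀ x ∈ σ, x p ≠ -1
    _ = _ := by
        congr 1; ext z
        simp only [mem_filter, mem_univ, true_and, forall_mem_insert,
          ← hγ.insert_iff hd1 hd hlo hlod]
        constructor
        · rintro ⟨h1, h2, h3, _⟩; exact ⟨⟨h1, h2⟩, h3⟩
        · rintro ⟨⟨h1, h2⟩, h3⟩; exact ⟨h1, h2, h3, hhem⟩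

/-- Below the top level, the completing vertices are the two covers of `lo` below the vertex of
size `d + 1`. -/
lemma card_completions_of_lt (hp : p ∈ U) (hγ : IsChainOn U γ) (hhem : ∀ x ∈ γ, x p ≠ -1)
    (hd : ∀ e ∈ Icc 1 #U, e ∈ γ.image (#·.supp) ↔ e ≠ d) (hdU : d < #U)
    (hlo : lo ∈ insert 0 γ) (hlod : #lo.supp + 1 = d) :
    #{z | (z.supp ⊆ U ∧ #z.supp = d ∧ lo ≤ z ∧ ∀ y ∈ γ, d < #y.supp → z ≤ y) ∧ z p ≠ -1} =
      if ∀ x ∈ γ, x p = 0 then 1 else 2 := by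
  obtain ⟨hi, hhi, hhid⟩ := mem_image.1 ((hd (d + 1) (mem_Icc.2 ⟨by omega, hdU⟩)).2 (by omega))
  have hlohi : lo ≤ hi := le_of_isChain_of_card_supp_le hγ.isChain_insert_zero hlo
    (mem_insert_of_mem hhi) (by omega)
  have hbetween : ({z | (z.supp ⊆ U ∧ #z.supp = d ∧ lo ≤ z ∧ ∀ y ∈ γ, d < #y.supp → z ≤ y) ∧
      z p ≠ -1} : Finset (SignVector α)) =
        ({z | lo ≤ z ∧ z ≤ hi ∧ #z.supp = #lo.supp + 1} : Finset (SignVector α)) := by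
    ext z
    simp only [mem_filter, mem_univ, true_and]
    constructor
    · rintro ⟨⟨-, hzd, hloz, hup⟩, -⟩
      exact ⟨hloz, hup hi hhi (by omega), by omega⟩
    · rintro ⟨hloz, hzhi, hzd⟩
      refine ⟨⟨(supp_mono hzhi).trans (hγ.1 hi hhi).2, by omega, hloz, fun y hy hdy =>
        hzhi.trans (hγ.le_of_card_supp_le hhi hy (by omega))⟩, fun h => hhem hi hhi ?_⟩
      rw [hzhi p (by rw [h]; decide), h]
  obtain ⟨top, htop, htopd⟩ := mem_image.1 ((hd #U (mem_Icc.2 ⟨by omega, le_rfl⟩)).2 (by omega))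
  have htopU : top.supp = U := eq_of_subset_of_card_le (hγ.1 top htop).2 htopd.ge
  rw [hbetween, card_covers_between hlohi, if_neg fun h => mem_supp.1 (htopU ▸ hp) (h top htop)]
  omega

/-- At the top level, the completing vertices extend `lo` by `±q` at the point `q` it misses;
the hemisphere forbids `-q` exactly when `q = p`, which is when `γ` lies on the equator. -/
lemma card_completions_of_eq (hp : p ∈ U) (hγ : IsChainOn U γ) (hhem : ∀ x ∈ γ, x p ≠ -1)
    (hd : ∀ e ∈ Icc 1 #U, e ∈ γ.image (#·.supp) ↔ e ≠ #U) (hlo : lo ∈ insert 0 γ)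
    (hlod : #lo.supp + 1 = #U) :
    #{z | (z.supp ⊆ U ∧ #z.supp = #U ∧ lo ≤ z ∧ ∀ y ∈ γ, #U < #y.supp → z ≤ y) ∧ z p ≠ -1} =
      if ∀ x ∈ γ, x p = 0 then 1 else 2 := by
  have hlo' : lo = 0 ∨ lo ∈ γ := mem_insert.1 hlo
  have hloU : lo.supp ⊆ U := by rcases hlo' with rfl | h; exacts [by simp, (hγ.1 lo h).2]
  have hlop : lo p ≠ -1 := by rcases hlo' with rfl | h; exacts [by simp, hhem lo h]
  obtain ⟨q, hq, hUq⟩ := exists_eq_insert_iff.2 ⟨hloU, hlod⟩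
  have htop : ({z | (z.supp ⊆ U ∧ #z.supp = #U ∧ lo ≤ z ∧ ∀ y ∈ γ, #U < #y.supp → z ≤ y) ∧
      z p ≠ -1} : Finset (SignVector α)) =
        ({z ∈ {lo.update q 1, lo.update q (-1)} | z p ≠ -1} : Finset (SignVector α)) := by
    rw [← filter_supp_eq_insert (by simpa using hq), filter_filter, hUq]
    refine filter_congr fun z _ => and_congr_left fun _ => ⟨fun ⟨hzU, hzd, hloz, _⟩ =>
      ⟨hloz, eq_of_subset_of_card_le hzU hzd.ge⟩, fun ⟨hloz, hzU⟩ => ⟨hzU.le, by rw [hzU],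
      hloz, fun y hy hy' => absurd (card_le_card (hγ.1 y hy).2) (by omega)⟩⟩
  rw [htop, card_filter_update_ne_neg_one hlop]
  refine if_congr ⟨fun hqp y hy => ?_, fun hequator => ?_⟩ rfl rfl
  · subst hqp
    have hyd : #y.supp < #U := (card_le_card (hγ.1 y hy).2).lt_of_ne
      ((hd _ (hγ.card_supp_mem_Icc hy)).1 (mem_image_of_mem _ hy))
    by_contra hyq
    exact hq (supp_mono (le_of_isChain_of_card_supp_le hγ.isChain_insert_zero
      (mem_insert_of_mem hy) hlo (by omega)) (mem_supp.2 hyq))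
  · by_contra hqp
    have hplo : p ∈ lo.supp := (mem_insert.1 (hUq ▸ hp)).resolve_left (Ne.symm hqp)
    rcases hlo' with rfl | hlo'
    · simp at hplo
    · exact mem_supp.1 hplo (hequator lo hlo')

theorem card_hemisphere_completions (hp : p ∈ U) (hγ : IsChainOn U γ)
    (hcard : #γ + 1 = #U) (hhem : ∀ x ∈ γ, x p ≠ -1) :
    #{σ | IsChainOn U σ ∧ #σ = #U ∧ (∀ x ∈ σ, x p ≠ -1) ∧ γ ⊆ σ} =
      if ∀ x ∈ γ, x p = 0 then 1 else 2 := by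
  obtain ⟨d, hdI, hd⟩ := hγ.exists_missing_card hcard
  obtain ⟨hd1, hdU⟩ := mem_Icc.1 hdI
  obtain ⟨lo, hlo, hlod⟩ : ∃ lo ∈ insert 0 γ, #lo.supp + 1 = d := by
    rcases hd1.eq_or_lt with rfl | h1
    · exact ⟨0, mem_insert_self 0 γ, by simp⟩
    obtain ⟨lo, hlo, hlod⟩ :=
      mem_image.1 ((hd (d - 1) (mem_Icc.2 ⟨by omega, by omega⟩)).2 (by omega))
    exact ⟨lo, mem_insert_of_mem hlo, by omega⟩
  rw [hγ.card_hemisphere_supersets hcard hhem hd1 hd hlo hlod]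
  rcases hdU.lt_or_eq with hdU | rfl
  · exact hγ.card_completions_of_lt hp hhem hd hdU hlo hlod
  · exact hγ.card_completions_of_eq hp hhem hd hlo hlod

end IsChainOn

end Completions

section Fan

variable [Fintype α] {U : Finset α} {lam : SignVector α → ℤ} {p : α}

lemma IsChainOn.hemisphere_neg_iff {σ : Finset (SignVector α)} (hσ : IsChainOn U σ)
    (hcard : #σ = #U) (hp : p ∈ U) : (∀ x ∈ -σ, x p ≠ -1) ↔ ¬∀ x ∈ σ, x p ≠ -1 := by
  have hneg : (∀ x ∈ -σ, x p ≠ -1) ↔ ∀ x ∈ σ, x p ≠ 1 := by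
    refine ⟨fun h x hx => ?_, fun h x hx => ?_⟩
    · simpa using h (-x) (by simpa using hx)
    · simpa [neg_eq_iff_eq_neg] using h (-x) (mem_neg'.1 hx)
  rw [hneg]
  constructor
  · intro h hall
    obtain ⟨top, htop, htopU⟩ := hσ.exists_supp_eq hcard ⟨p, hp⟩
    rcases (by decide : ∀ s : SignType, s = 0 ∨ s = 1 ∨ s = -1) (top p) with h0 | h1 | h1
    exacts [mem_supp.1 (htopU ▸ hp) h0, h top htop h1, hall top htop h1]
  · intro h x hx hx1
    obtain ⟨y, hy, hy1⟩ : ∃ y ∈ σ, y p = -1 := by simpa using h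
    have := hσ.apply_eq hx hy (by rw [hx1]; decide) (by rw [hy1]; decide)
    rw [hx1, hy1] at this
    exact absurd this (by decide)

namespace IsTuckerLabeling

/-- Negation maps the positively alternating full chains off the hemisphere `{x | x p ≠ -1}`
to the negatively alternating ones on it. -/
lemma card_full_isAlternating_eq (h : IsTuckerLabeling U lam) (hp : p ∈ U) :
    #{σ | IsChainOn U σ ∧ #σ = #U ∧ IsAlternating lam true σ} =
      #{σ | (IsChainOn U σ ∧ #σ = #U ∧ ∀ x ∈ σ, x p ≠ -1) ∧ IsAlternating lam true σ} +
        #{σ | (IsChainOn U σ ∧ #σ = #U ∧ ∀ x ∈ σ, x p ≠ -1) ∧ IsAlternating lam false σ} := by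
  rw [← card_filter_add_card_filter_not (fun σ : Finset (SignVector α) => ∀ x ∈ σ, x p ≠ -1),
    filter_filter, filter_filter]
  congr 1
  · congr 1; ext σ; simp only [mem_filter, mem_univ, true_and]; tauto
  refine card_nbij' (-·) (-·) (fun σ hσ => ?_) (fun σ hσ => ?_) (fun σ _ => finset_neg_neg σ)
    fun σ _ => finset_neg_neg σ
  · simp only [coe_filter, mem_univ, true_and, Set.mem_ofPred_eq] at hσ ⊢
    obtain ⟨⟨hc, hcard, halt⟩, hhem⟩ := hσ
    exact ⟨⟨hc.neg, by rwa [card_neg], (hc.hemisphere_neg_iff hcard hp).2 hhem⟩,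
      (h.isAlternating_neg hc false).2 halt⟩
  · simp only [coe_filter, mem_univ, true_and, Set.mem_ofPred_eq] at hσ ⊢
    obtain ⟨⟨hc, hcard, hhem⟩, halt⟩ := hσ
    have hcard' : #(-σ) = #U := by rwa [card_neg]
    refine ⟨⟨hc.neg, hcard', (h.isAlternating_neg hc true).2 halt⟩, ?_⟩
    rwa [← hc.neg.hemisphere_neg_iff hcard' hp, finset_neg_neg]

/-- Both sides count, modulo 2, the positively alternating facets of the full chains in the
hemisphere `{x | x p ≠ -1}`. -/
theorem card_full_isAlternating_modEq_erase (h : IsTuckerLabeling U lam) (hp : p ∈ U) :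
    #{σ | IsChainOn U σ ∧ #σ = #U ∧ IsAlternating lam true σ} ≡
      #{σ | IsChainOn (U.erase p) σ ∧ #σ = #(U.erase p) ∧ IsAlternating lam true σ} [MOD 2] := by
  set FH : Finset (Finset (SignVector α)) := {σ | IsChainOn U σ ∧ #σ = #U ∧ ∀ x ∈ σ, x p ≠ -1}
  set C : Finset (Finset (SignVector α)) := {γ ∈ ({γ | IsAlternating lam true γ} : Finset _) |
    IsChainOn U γ ∧ #γ + 1 = #U ∧ ∀ x ∈ γ, x p ≠ -1}
  have hcompletions : ∀ γ ∈ C, #{σ ∈ FH | γ ⊆ σ ∧ #σ = #γ + 1} =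
      if ∀ x ∈ γ, x p = 0 then 1 else 2 := fun γ hγ => by
    obtain ⟨hc, hcard, hhem⟩ := (mem_filter.1 hγ).2
    rw [← hc.card_hemisphere_completions hp hcard hhem, filter_filter]
    congr 1; ext σ; simp only [mem_filter, mem_univ, true_and, hcard]; tauto
  calc #{σ | IsChainOn U σ ∧ #σ = #U ∧ IsAlternating lam true σ}
      = ∑ σ ∈ FH, ((if IsAlternating lam true σ then 1 else 0) +
          (if IsAlternating lam false σ then 1 else 0)) := by
        rw [h.card_full_isAlternating_eq hp, sum_add_distrib, ← card_filter, ← card_filter,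
          filter_filter, filter_filter]
    _ ≡ ∑ σ ∈ FH, #{x ∈ σ | IsAlternating lam true (σ.erase x)} [MOD 2] :=
        Nat.ModEq.sum fun σ hσ =>
          (h.card_filter_isAlternating_erase_modEq (mem_filter.1 hσ).2.1).symm
    _ = ∑ γ ∈ C, #{σ ∈ FH | γ ⊆ σ ∧ #σ = #γ + 1} := by
        rw [Finset.sum_card_filter_erase]
        refine (sum_filter_of_ne fun γ _ hne => ?_).symm
        obtain ⟨σ, hσ⟩ := card_pos.1 (Nat.pos_of_ne_zero hne)
        obtain ⟨hσFH, hγσ, hcard⟩ := mem_filter.1 hσ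
        obtain ⟨hc, hcardσ, hhem⟩ := (mem_filter.1 hσFH).2
        exact ⟨hc.subset hγσ, by omega, fun x hx => hhem x (hγσ hx)⟩
    _ = ∑ γ ∈ C, if ∀ x ∈ γ, x p = 0 then 1 else 2 := sum_congr rfl hcompletions
    _ ≡ #{γ ∈ C | ∀ x ∈ γ, x p = 0} [MOD 2] := by
        rw [sum_ite, sum_const, sum_const, smul_eq_mul, smul_eq_mul, mul_one]
        exact Nat.add_mul_mod_self_right _ _ _
    _ = _ := by
        congr 1; ext γ
        simp only [C, mem_filter, mem_univ, true_and, isChainOn_erase_iff, card_erase_of_mem hp]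
        constructor
        · rintro ⟨⟨halt, hc, hcard, -⟩, h0⟩; exact ⟨⟨hc, h0⟩, by omega, halt⟩
        · rintro ⟨⟨hc, h0⟩, hcard, halt⟩
          refine ⟨⟨halt, hc, ?_, fun x hx => by rw [h0 x hx]; decide⟩, h0⟩
          have := card_pos.2 ⟨p, hp⟩; omega

/-- Ky Fan's lemma, octahedral form. -/
theorem odd_card_full_isAlternating (h : IsTuckerLabeling U lam) :
    Odd #{σ | IsChainOn U σ ∧ #σ = #U ∧ IsAlternating lam true σ} := by
  induction U using Finset.strongInduction with
  | H U ih =>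
  rcases U.eq_empty_or_nonempty with rfl | ⟨p, hp⟩
  · convert odd_one
    refine card_eq_one.2 ⟨∅, eq_singleton_iff_unique_mem.2 ⟨?_, fun σ hσ => ?_⟩⟩
    · simp [IsChainOn, IsAlternating, labels, Alternates]
    · exact card_eq_zero.1 (mem_filter.1 hσ).2.2.1
  · rw [Nat.odd_iff, h.card_full_isAlternating_modEq_erase hp, ← Nat.odd_iff]
    exact ih _ (erase_ssubset hp) (h.mono (erase_subset p U))

/-- Tucker's lemma. -/
theorem exists_card_le_natAbs (h : IsTuckerLabeling U lam) (hU : U.Nonempty) :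
    ∃ x, IsNonzeroOn U x ∧ #U ≤ (lam x).natAbs := by
  obtain ⟨σ, hσ⟩ := card_pos.1 h.odd_card_full_isAlternating.pos
  obtain ⟨hc, hcard, halt⟩ := (mem_filter.1 hσ).2
  have hlen : (labels lam σ).length = #U := by rw [length_labels, hcard]
  obtain ⟨a, ha, hbig⟩ := Alternates.exists_le_natAbs halt fun h0 => by
    rw [h0] at hlen; exact (card_pos.2 hU).ne' hlen.symm
  obtain ⟨x, hx, rfl⟩ := mem_labels.1 ha
  exact ⟨x, hc.1 x hx, by omega⟩

end IsTuckerLabeling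

end Fan

section Kneser

variable [Fintype α]

noncomputable def posPart (x : SignVector α) : Finset α := {a | x a = 1}

noncomputable def negPart (x : SignVector α) : Finset α := {a | x a = -1}

@[simp] lemma posPart_neg (x : SignVector α) : (-x).posPart = x.negPart := by
  ext a; simp [posPart, negPart, neg_eq_iff_eq_neg]

@[simp] lemma negPart_neg (x : SignVector α) : (-x).negPart = x.posPart := by
  ext a; simp [posPart, negPart, neg_eq_iff_eq_neg]

lemma disjoint_posPart_negPart (x : SignVector α) : Disjoint x.posPart x.negPart :=
  disjoint_left.2 fun a ha hb => by
    simp only [posPart, negPart, mem_filter, mem_univ, true_and] at ha hb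
    rw [ha] at hb; exact absurd hb (by decide)

lemma card_supp_eq (x : SignVector α) : #x.supp = #x.posPart + #x.negPart := by
  rw [← card_union_of_disjoint x.disjoint_posPart_negPart]
  congr 1; ext a
  simp only [mem_supp, posPart, negPart, mem_union, mem_filter, mem_univ, true_and]
  cases x a <;> decide

lemma posPart_mono (h : x ≤ y) : x.posPart ⊆ y.posPart := fun a ha => by
  simp only [posPart, mem_filter, mem_univ, true_and] at ha ⊢
  rw [h a (by rw [ha]; decide), ha]

lemma negPart_mono (h : x ≤ y) : x.negPart ⊆ y.negPart := by
  simpa using posPart_mono (neg_le_neg h)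

variable [LinearOrder α] {k : ℕ} {c : Finset α → ℕ}

noncomputable def leadSign (x : SignVector α) : SignType :=
  if h : x.supp.Nonempty then x (x.supp.min' h) else 0

@[simp] lemma leadSign_neg (x : SignVector α) : (-x).leadSign = -x.leadSign := by
  unfold leadSign
  simp only [supp_neg, neg_apply]
  split_ifs <;> rfl

lemma leadSign_ne_zero (hx : x ≠ 0) : x.leadSign ≠ 0 := by
  have hne : x.supp.Nonempty := nonempty_iff_ne_empty.2 fun h => hx (supp_eq_empty.1 h)
  rw [leadSign, dif_pos hne]
  exact mem_supp.1 (min'_mem _ hne)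

lemma leadSign_neg_eq_one_iff (hx : x ≠ 0) : (-x).leadSign = 1 ↔ x.leadSign ≠ 1 := by
  have := leadSign_ne_zero hx
  rw [leadSign_neg]
  revert this; cases x.leadSign <;> decide

/-- Matoušek's labelling attached to a colouring `c` of the `k`-subsets. -/
noncomputable def kneserLabel (k : ℕ) (c : Finset α → ℕ) (x : SignVector α) : ℤ :=
  if #x.supp + 2 ≤ 2 * k then (if x.leadSign = 1 then (#x.supp : ℤ) else -#x.supp)
  else if k ≤ #x.posPart ∧ (#x.negPart < k ∨ x.leadSign = 1) then
    2 * k - 1 + c (chooseSubset k x.posPart)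
  else -(2 * k - 1 + c (chooseSubset k x.negPart))

lemma kneserLabel_neg (hx : x ≠ 0) : kneserLabel k c (-x) = -kneserLabel k c x := by
  have hlead := leadSign_neg_eq_one_iff hx
  have hsupp := card_supp_eq x
  unfold kneserLabel
  simp only [supp_neg, posPart_neg, negPart_neg]
  by_cases hs : #x.supp + 2 ≤ 2 * k
  · by_cases hl : x.leadSign = 1 <;>
      simp only [hs, hl, hlead, ne_eq, not_true_eq_false, not_false_eq_true, if_true, if_false,
        neg_neg]
  rw [if_neg hs, if_neg hs]
  by_cases hpos : k ≤ #x.posPart ∧ (#x.negPart < k ∨ x.leadSign = 1)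
  · have hneg : ¬(k ≤ #x.negPart ∧ (#x.posPart < k ∨ (-x).leadSign = 1)) := fun ⟨h1, h2⟩ => by
      rcases h2 with h2 | h2
      · omega
      · exact hlead.1 h2 (hpos.2.resolve_left (by omega))
    rw [if_pos hpos, if_neg hneg]
  · have hneg : k ≤ #x.negPart ∧ (#x.posPart < k ∨ (-x).leadSign = 1) := by
      by_cases h1 : k ≤ #x.posPart
      · have h2 : ¬(#x.negPart < k ∨ x.leadSign = 1) := fun h => hpos ⟨h1, h⟩
        exact ⟨by omega, Or.inr (hlead.2 fun h => h2 (Or.inr h))⟩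
      · exact ⟨by omega, Or.inl (by omega)⟩
    rw [if_neg hpos, if_pos hneg, neg_neg]

lemma natAbs_kneserLabel_of_small (h : #x.supp + 2 ≤ 2 * k) :
    (kneserLabel k c x).natAbs = #x.supp := by
  unfold kneserLabel
  split_ifs <;> simp

lemma kneserLabel_of_large (h : ¬#x.supp + 2 ≤ 2 * k) :
    (∃ A ⊆ x.posPart, #A = k ∧ kneserLabel k c x = 2 * k - 1 + c A) ∨
      ∃ A ⊆ x.negPart, #A = k ∧ kneserLabel k c x = -(2 * k - 1 + c A) := by
  have hsupp := card_supp_eq x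
  unfold kneserLabel
  rw [if_neg h]
  split_ifs with hpos
  · exact Or.inl ⟨_, chooseSubset_subset _ _, card_chooseSubset hpos.1, rfl⟩
  · exact Or.inr ⟨_, chooseSubset_subset _ _, card_chooseSubset (by omega), rfl⟩

lemma natAbs_kneserLabel_lt {t : ℕ} (hc : ∀ A, c A ≤ t) (hk : 0 < k)
    (hα : Fintype.card α = 2 * k + t) (x : SignVector α) :
    (kneserLabel k c x).natAbs < Fintype.card α := by
  by_cases h : #x.supp + 2 ≤ 2 * k
  · unfold kneserLabel; split_ifs <;> simp <;> omega
  · rcases kneserLabel_of_large (c := c) h with ⟨A, -, -, hA⟩ | ⟨A, -, -, hA⟩ <;>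
      · rw [hA]; have := hc A; omega

lemma isTuckerLabeling_kneserLabel (hk : 0 < k)
    (hc : ∀ A B, #A = k → #B = k → Disjoint A B → c A ≠ c B) :
    IsTuckerLabeling univ (kneserLabel k c) := by
  refine ⟨fun x hx => kneserLabel_neg hx.1, fun x y hx hy hxy heq => ?_⟩
  have habs : (kneserLabel k c x).natAbs = (kneserLabel k c y).natAbs := by
    rw [heq, Int.natAbs_neg]
  have hlarge : ∀ z, ¬#z.supp + 2 ≤ 2 * k → 2 * k - 1 ≤ (kneserLabel k c z).natAbs := fun z hz => by
    rcases kneserLabel_of_large (c := c) hz with ⟨A, -, -, hA⟩ | ⟨A, -, -, hA⟩ <;> omega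
  have hxy' := card_le_card (supp_mono hxy)
  by_cases hsx : #x.supp + 2 ≤ 2 * k <;> by_cases hsy : #y.supp + 2 ≤ 2 * k
  · rw [natAbs_kneserLabel_of_small hsx, natAbs_kneserLabel_of_small hsy] at habs
    obtain rfl := eq_of_le_of_card_supp_le hxy habs.ge
    have := natAbs_kneserLabel_of_small (c := c) hsx
    have := hx.card_supp_pos
    omega
  · have := hlarge y hsy; rw [natAbs_kneserLabel_of_small hsx] at habs; omega
  · omega
  rcases kneserLabel_of_large (c := c) hsx with ⟨A, hA, hAk, hlabA⟩ | ⟨A, hA, hAk, hlabA⟩ <;>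
    rcases kneserLabel_of_large (c := c) hsy with ⟨B, hB, hBk, hlabB⟩ | ⟨B, hB, hBk, hlabB⟩
  · omega
  · refine hc A B hAk hBk ?_ (by omega)
    exact disjoint_of_subset_left (hA.trans (posPart_mono hxy))
      (disjoint_of_subset_right hB y.disjoint_posPart_negPart)
  · refine hc B A hBk hAk ?_ (by omega)
    exact disjoint_of_subset_right (hA.trans (negPart_mono hxy))
      (disjoint_of_subset_left hB y.disjoint_posPart_negPart)
  · omega

end Kneser

end SignVector

/-- Lovász's theorem (Kneser's conjecture). -/
theorem exists_disjoint_eq_of_card_eq {α : Type*} [Fintype α] [LinearOrder α] {k t : ℕ}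
    (hk : 0 < k) (hα : Fintype.card α = 2 * k + t) (c : Finset α → ℕ) (hc : ∀ A, c A ≤ t) :
    ∃ A B, #A = k ∧ #B = k ∧ Disjoint A B ∧ c A = c B := by
  by_contra! hne
  obtain ⟨x, -, hx⟩ := (SignVector.isTuckerLabeling_kneserLabel hk hne).exists_card_le_natAbs
    (univ_nonempty_iff.2 ⟨(Fintype.equivFin α).symm ⟨0, by omega⟩⟩)
  rw [card_univ] at hx
  exact (SignVector.natAbs_kneserLabel_lt hc hk hα x).not_ge hx

def kneserGraph (n k : ℕ) : SimpleGraph {A : Finset (Fin n) // #A = k} where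
  Adj A B := A ≠ B ∧ Disjoint A.1 B.1
  symm := ⟨fun _ _ h => ⟨h.1.symm, h.2.symm⟩⟩
  loopless := ⟨fun _ h => h.1 rfl⟩

lemma kneserGraph_not_colorable {k t : ℕ} (hk : 0 < k) :
    ¬(kneserGraph (2 * k + t) k).Colorable (t + 1) := by
  rintro ⟨C⟩
  obtain ⟨A, B, hA, hB, hAB, hcol⟩ := exists_disjoint_eq_of_card_eq hk (Fintype.card_fin _)
    (fun A => if h : #A = k then (C ⟨A, h⟩ : ℕ) else 0)
    fun A => by split_ifs <;> omega
  simp only [dif_pos hA, dif_pos hB] at hcol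
  refine C.valid (show (kneserGraph _ k).Adj ⟨A, hA⟩ ⟨B, hB⟩ from ⟨fun h => ?_, hAB⟩)
    (Fin.ext hcol)
  rw [Subtype.mk.injEq] at h
  subst h
  rw [disjoint_self, bot_eq_empty] at hAB
  simp [hAB] at hA
  omega

lemma hasCover_kneserGraph (n k : ℕ) : HasCover (kneserGraph n k) n (2 * k) := by
  refine ⟨fun i => {e | e ∈ (kneserGraph n k).edgeSet ∧ ∃ A B, e = s(A, B) ∧
    A ∈ {A | i ∈ A.1} ∧ B ∉ {A | i ∈ A.1}}, fun i => ⟨_, rfl⟩, fun e he => ?_⟩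
  induction e with
  | h A B =>
  have hadj : (kneserGraph n k).Adj A B := he
  have hAB : Disjoint A.1 B.1 := hadj.2
  calc 2 * k = #(A.1 ∪ B.1) := by rw [card_union_of_disjoint hAB, A.2, B.2]; ring
    _ ≤ _ := card_le_card fun i hi => by
      simp only [mem_filter, mem_univ, true_and, Set.mem_ofPred_eq]
      rcases mem_union.1 hi with h | h
      · exact ⟨he, A, B, rfl, h, disjoint_left.1 hAB h⟩
      · exact ⟨he, B, A, Sym2.eq_swap, h, disjoint_right.1 hAB h⟩

lemma cutCover_le_div {V : Type*} {G : SimpleGraph V} {n k : ℕ} (h : HasCover G n k)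
    (hk : 0 < k) : cutCover G ≤ n / k :=
  csInf_le ⟨0, fun _ ⟨_, _, _, hq, _⟩ => hq ▸ by positivity⟩ ⟨n, k, hk, rfl, h⟩

lemma two_div_two_sub_lt {x ε : ℝ} (hε : 0 < ε) (hx : x < 2 - 2 / (2 + ε)) :
    2 / (2 - x) < 2 + ε := by
  have hpos : 0 < 2 / (2 + ε) := by positivity
  calc 2 / (2 - x) < 2 / (2 / (2 + ε)) := div_lt_div_of_pos_left two_pos hpos (by linarith)
    _ = 2 + ε := by field_simp

/-- For every `ε > 0` and `b` there is a graph `G` with `χ_q(G) < 2 + ε` and `χ(G) > b`. -/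
theorem exists_small_chiq_large_chrom (ε : ℝ) (hε : 0 < ε) (b : ℕ) :
    ∃ (V : Type) (_ : Fintype V) (G : SimpleGraph V),
      2 / (2 - cutCover G) < 2 + ε ∧ (b : ℕ∞) < G.chromaticNumber := by
  obtain ⟨k, hk⟩ := exists_nat_gt ((b : ℝ) * (2 + ε) / (2 * ε))
  have hk0 : 0 < k := by exact_mod_cast (show (0 : ℝ) < k from lt_of_le_of_lt (by positivity) hk)
  have hbk : (b : ℝ) * (2 + ε) < 2 * ε * k := by
    rw [div_lt_iff₀ (by positivity)] at hk; linarith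
  refine ⟨_, inferInstance, kneserGraph (2 * k + b) k, two_div_two_sub_lt hε ?_, ?_⟩
  · calc cutCover (kneserGraph (2 * k + b) k) ≤ ((2 * k + b : ℕ) : ℝ) / (2 * k : ℕ) :=
          cutCover_le_div (hasCover_kneserGraph _ _) (by omega)
      _ < 2 - 2 / (2 + ε) := by
          have e : (2 : ℝ) - 2 / (2 + ε) = (2 + 2 * ε) / (2 + ε) := by field_simp; ring
          rw [e, div_lt_div_iff₀ (by positivity) (by positivity)]
          push_cast
          nlinarith
  · by_contra! h
    exact kneserGraph_not_colorable hk0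
      ((SimpleGraph.chromaticNumber_le_iff_colorable.1 h).mono (by omega))
end

section
/- Let k ≤ n < 2k with k even, and let 1 ≤ x ≤ n be an integer. Then Σ_{t odd} C(x,t)·C(n−x, k−t) ≤ C(n−1, k−1). -/
/-!
Write `K(a, b, k)` for the coefficient of `X ^ k` in `(1 - X) ^ a * (1 + X) ^ b`, i.e. the
Krawtchouk polynomial `K_k` on `a + b` points evaluated at `a`. Splitting Vandermonde's identity
by parity gives `2 * (odd sum) = C(n, k) - K(x, n - x, k)`, and `C(n, k) - 2 C(n-1, k-1)` is
`K(1, n - 1, k)`, so the claim is `K(1, n - 1, k) ≤ K(x, n - x, k)`.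

More generally `K(1, n - 1, k) ≤ (-1) ^ k K(x, n - x, k)` for `1 ≤ x ≤ n ≤ 2k - 1`. The Pascal
recurrences reduce this, by induction on `x`, to the boundary case `n = 2k - 1`. There the values
at `x = 2u - 1` and `x = 2u` coincide, and `(-1) ^ u` times them is a positive sequence in `u`
with ratios `(2u + 1) / (2k - 2u - 1)`; both facts come from the symmetry of the coefficients
under `X ↦ 1 / X` and from differentiating. This sequence is symmetric and unimodal, so on
`1 ≤ u ≤ k - 1` it is largest at `u = 1`, where it equals `-K(1, n - 1, k)`.
-/

open Finset Polynomial

theorem Polynomial.coeff_one_sub_X_pow (R : Type*) [CommRing R] (n k : ℕ) :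
    ((1 - X) ^ n : R[X]).coeff k = (-1) ^ k * n.choose k := by
  induction n generalizing k with
  | zero => cases k <;> simp [coeff_one]
  | succ n ih =>
    rw [pow_succ, mul_sub, mul_one, coeff_sub]
    cases k with
    | zero => simp [ih]
    | succ k => rw [coeff_mul_X, ih, ih, Nat.choose_succ_succ']; push_cast; ring

theorem Polynomial.reflect_pow_of_natDegree_le_one {R : Type*} [Semiring R] {p : R[X]}
    (hp : p.natDegree ≤ 1) (n : ℕ) : reflect n (p ^ n) = reflect 1 p ^ n := by
  induction n with
  | zero => simp [reflect_one]
  | succ n ih =>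
    rw [pow_succ, reflect_mul _ _ (natDegree_pow_le_of_le n hp |>.trans (by simp)) hp, ih, pow_succ]

theorem Nat.choose_succ_le_choose_of_le_two_mul {n k : ℕ} (h : n ≤ 2 * k) :
    n.choose (k + 1) ≤ n.choose k := by
  refine Nat.le_of_mul_le_mul_right ?_ k.succ_pos
  rw [Nat.choose_succ_right_eq]
  exact Nat.mul_le_mul_left _ (by omega)

/-- `krawtchouk a b k` is the value at `a` of the Krawtchouk polynomial `K_k` on `a + b` points. -/
noncomputable def krawtchouk (a b k : ℕ) : ℤ := ((1 - X) ^ a * (1 + X) ^ b : ℤ[X]).coeff k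

namespace krawtchouk

theorem eq_sum_range (a b k : ℕ) :
    krawtchouk a b k = ∑ t ∈ range (k + 1), (-1 : ℤ) ^ t * a.choose t * b.choose (k - t) := by
  rw [krawtchouk, coeff_mul, Nat.sum_antidiagonal_eq_sum_range_succ_mk]
  simp only [coeff_one_sub_X_pow, coeff_one_add_X_pow]

theorem zero_left (b k : ℕ) : krawtchouk 0 b k = b.choose k := by
  simp [krawtchouk, coeff_one_add_X_pow]

theorem succ_left (a b k : ℕ) :
    krawtchouk (a + 1) b (k + 1) = krawtchouk a b (k + 1) - krawtchouk a b k := by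
  simp only [krawtchouk, pow_succ, coeff_sub, coeff_X_mul,
    show ∀ p : ℤ[X], p * (1 - X) * (1 + X) ^ b = p * (1 + X) ^ b - X * (p * (1 + X) ^ b) from
      fun p => by ring]

theorem succ_right (a b k : ℕ) :
    krawtchouk a (b + 1) (k + 1) = krawtchouk a b (k + 1) + krawtchouk a b k := by
  simp only [krawtchouk, pow_succ, coeff_add, coeff_X_mul,
    show ∀ p q : ℤ[X], p * (q * (1 + X)) = p * q + X * (p * q) from fun p q => by ring]

theorem swap (a b k : ℕ) : krawtchouk b a k = (-1) ^ k * krawtchouk a b k := by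
  rw [eq_sum_range, eq_sum_range, mul_sum, ← sum_range_reflect]
  refine sum_congr rfl fun t ht => ?_
  have ht : t ≤ k := Nat.lt_succ_iff.mp (mem_range.mp ht)
  have hk : (-1 : ℤ) ^ k = (-1) ^ (k - t) * (-1) ^ t := by rw [← pow_add, Nat.sub_add_cancel ht]
  have ht2 : (-1 : ℤ) ^ t * (-1) ^ t = 1 := by rw [← pow_add, ← two_mul, pow_mul]; norm_num
  rw [Nat.add_sub_cancel, Nat.sub_sub_self ht, hk]
  linear_combination -(-1 : ℤ) ^ (k - t) * (b.choose (k - t)) * (a.choose t) * ht2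

theorem zero_right (a k : ℕ) : krawtchouk a 0 k = (-1) ^ k * a.choose k := by
  rw [swap, zero_left]

theorem two_mul_sum_odd (a b k : ℕ) :
    2 * ((∑ t ∈ (range (k + 1)).filter (fun t => Odd t),
      a.choose t * b.choose (k - t) : ℕ) : ℤ) =
      (a + b).choose k - krawtchouk a b k := by
  rw [eq_sum_range, Nat.add_choose_eq, Nat.sum_antidiagonal_eq_sum_range_succ_mk, sum_filter]
  push_cast
  rw [mul_sum, ← sum_sub_distrib]
  refine sum_congr rfl fun t _ => ?_
  rcases Nat.even_or_odd t with ht | ht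
  · simp [ht.neg_one_pow, Nat.not_odd_iff_even.mpr ht]
  · simp only [ht, ↓reduceIte, ht.neg_one_pow, neg_mul, one_mul, sub_neg_eq_add]
    ring

theorem reflect (a b j : ℕ) (hj : j ≤ a + b) :
    krawtchouk a b (a + b - j) = (-1) ^ a * krawtchouk a b j := by
  have h1 : (1 - X : ℤ[X]).natDegree ≤ 1 := by compute_degree!
  have h2 : (1 + X : ℤ[X]).natDegree ≤ 1 := by compute_degree!
  have h : Polynomial.reflect (a + b) ((1 - X) ^ a * (1 + X) ^ b : ℤ[X]) =
      C ((-1) ^ a) * ((1 - X) ^ a * (1 + X) ^ b) := by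
    rw [reflect_mul _ _ (natDegree_pow_le_of_le a h1 |>.trans (by simp))
      (natDegree_pow_le_of_le b h2 |>.trans (by simp)), reflect_pow_of_natDegree_le_one h1,
      reflect_pow_of_natDegree_le_one h2]
    have hX : (X - 1 : ℤ[X]) = -1 * (1 - X) := by ring
    simp only [reflect_sub, reflect_add, reflect_one, reflect_one_X, pow_one, C_pow, C_neg, C_1,
      hX, mul_pow, add_comm 1 X, mul_assoc]
  simpa only [krawtchouk, coeff_reflect, revAt_le hj, coeff_C_mul] using congrArg (coeff · j) h

theorem reflect_middle (a b j : ℕ) (h : a + b = 2 * j + 1) :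
    krawtchouk a b (j + 1) = (-1) ^ a * krawtchouk a b j := by
  rw [← reflect a b j (by omega), show a + b - j = j + 1 by omega]

theorem eq_zero_of_odd (a b j : ℕ) (ha : Odd a) (h : a + b = 2 * j) :
    krawtchouk a b j = 0 := by
  have := reflect a b j (by omega)
  rw [show a + b - j = j by omega, ha.neg_one_pow] at this
  linarith

theorem succ_left_eq_succ_right (a b j : ℕ) (ha : Odd a) (h : a + b = 2 * j) :
    krawtchouk (a + 1) b (j + 1) = krawtchouk a (b + 1) (j + 1) := by
  rw [succ_left, succ_right, eq_zero_of_odd a b j ha h, sub_zero, add_zero]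

theorem succ_mul_succ_succ (a b j : ℕ) :
    (j + 1) * krawtchouk (a + 1) (b + 1) (j + 1) =
      (b + 1) * krawtchouk (a + 1) b j - (a + 1) * krawtchouk a (b + 1) j := by
  have h : derivative ((1 - X) ^ (a + 1) * (1 + X) ^ (b + 1) : ℤ[X]) =
      C ((b : ℤ) + 1) * ((1 - X) ^ (a + 1) * (1 + X) ^ b) -
        C ((a : ℤ) + 1) * ((1 - X) ^ a * (1 + X) ^ (b + 1)) := by
    simp only [derivative_mul, derivative_pow_succ, derivative_sub, derivative_add,
      derivative_one, derivative_X, C_add, C_1, map_natCast]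
    ring
  have := congrArg (coeff · j) h
  simp only [coeff_derivative, coeff_sub, coeff_C_mul] at this
  simp only [krawtchouk]
  linarith

theorem one_nonpos (b j : ℕ) (h : b ≤ 2 * j) : krawtchouk 1 b (j + 1) ≤ 0 := by
  rw [succ_left, zero_left, zero_left, sub_nonpos]
  exact_mod_cast Nat.choose_succ_le_choose_of_le_two_mul h

/-- The value `(-1) ^ u K_k(2u)` of the Krawtchouk polynomial `K_k` on `2k - 1` points,
`k = u + v + 1`. -/
noncomputable def signedMiddle (u v : ℕ) : ℤ :=
  (-1) ^ u * krawtchouk (2 * u) (2 * v + 1) (u + v + 1)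

theorem signedMiddle_zero_left (v : ℕ) : signedMiddle 0 v = (2 * v + 1).choose (v + 1) := by
  simp [signedMiddle, zero_left]

theorem mul_signedMiddle_succ_left (u v : ℕ) :
    (2 * v + 3) * signedMiddle (u + 1) v = (2 * u + 1) * signedMiddle u (v + 1) := by
  -- differentiate `(1 - X) ^ (2u + 1) * (1 + X) ^ (2v + 3)`, whose middle coefficient vanishes
  have hodd : Odd (2 * u + 1) := odd_two_mul_add_one u
  have hd := succ_mul_succ_succ (2 * u) (2 * v + 2) (u + v + 1)
  rw [eq_zero_of_odd _ _ _ hodd (by ring)] at hd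
  have hr1 := reflect_middle (2 * u + 1) (2 * v + 2) (u + v + 1) (by ring)
  have hr2 := reflect_middle (2 * u) (2 * v + 3) (u + v + 1) (by ring)
  have hp := succ_left_eq_succ_right (2 * u + 1) (2 * v + 1) (u + v + 1) hodd (by ring)
  rw [hodd.neg_one_pow] at hr1
  rw [(even_two_mul u).neg_one_pow] at hr2
  simp only [signedMiddle, pow_succ, show 2 * (u + 1) = 2 * u + 1 + 1 by ring,
    show u + 1 + v + 1 = u + v + 1 + 1 by ring, show 2 * (v + 1) + 1 = 2 * v + 3 by ring,
    show u + (v + 1) + 1 = u + v + 1 + 1 by ring]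
  rw [show 2 * v + 2 + 1 = 2 * v + 3 by ring] at hd
  rw [show 2 * v + 1 + 1 = 2 * v + 2 by ring] at hp
  push_cast at hd ⊢
  linear_combination (-1 : ℤ) ^ u * (-(2 * (v : ℤ) + 3) * hp - (2 * (v : ℤ) + 3) * hr1 -
    (2 * (u : ℤ) + 1) * hr2 - hd)

theorem eq_neg_one_pow_mul_signedMiddle (u v : ℕ) :
    krawtchouk (2 * u) (2 * v + 1) (u + v + 1) = (-1) ^ u * signedMiddle u v := by
  rw [signedMiddle, ← mul_assoc, ← pow_add, ← two_mul, pow_mul, neg_one_sq, one_pow, one_mul]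

theorem signedMiddle_pos (u v : ℕ) : 0 < signedMiddle u v := by
  induction u generalizing v with
  | zero => rw [signedMiddle_zero_left]; exact_mod_cast Nat.choose_pos (by omega)
  | succ u ih =>
    refine pos_of_mul_pos_right ?_ (by positivity : (0 : ℤ) ≤ 2 * v + 3)
    rw [mul_signedMiddle_succ_left]
    exact mul_pos (by positivity) (ih (v + 1))

theorem signedMiddle_succ_left_comm (u v : ℕ) :
    signedMiddle (u + 1) v = signedMiddle (v + 1) u := by
  have hs := swap (2 * u + 1 + 1) (2 * v + 1) (u + v + 1 + 1)
  have hp := succ_left_eq_succ_right (2 * v + 1) (2 * u + 1) (u + v + 1)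
    (odd_two_mul_add_one v) (by ring)
  have hsign : (-1 : ℤ) ^ (v + 1) * (-1) ^ (u + v + 1 + 1) = (-1) ^ (u + 1) := by
    rw [← pow_add, show v + 1 + (u + v + 1 + 1) = u + 1 + 2 * (v + 1) by ring, pow_add, pow_mul]
    norm_num
  simp only [signedMiddle, show 2 * (u + 1) = 2 * u + 1 + 1 by ring,
    show 2 * (v + 1) = 2 * v + 1 + 1 by ring, show u + 1 + v + 1 = u + v + 1 + 1 by ring,
    show v + 1 + u + 1 = u + v + 1 + 1 by ring, hp, hs, ← mul_assoc, hsign]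

theorem signedMiddle_succ_left_le (u v : ℕ) (h : u ≤ v + 1) :
    signedMiddle (u + 1) v ≤ signedMiddle u (v + 1) := by
  refine le_of_mul_le_mul_left ?_ (by positivity : (0 : ℤ) < 2 * v + 3)
  rw [mul_signedMiddle_succ_left]
  have : (2 * u + 1 : ℤ) ≤ 2 * v + 3 := by exact_mod_cast (by omega : 2 * u + 1 ≤ 2 * v + 3)
  exact mul_le_mul_of_nonneg_right this (signedMiddle_pos u (v + 1)).le

theorem signedMiddle_le_one_left (u v : ℕ) :
    signedMiddle (u + 1) v ≤ signedMiddle 1 (u + v) := by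
  have hdecr : ∀ u v, 2 * u ≤ u + v + 1 →
      signedMiddle (u + 1) v ≤ signedMiddle 1 (u + v) := by
    intro u
    induction u with
    | zero => simp
    | succ u ih =>
      intro v h
      refine (signedMiddle_succ_left_le (u + 1) v (by omega)).trans ?_
      rw [show u + 1 + v = u + (v + 1) by ring]
      exact ih (v + 1) (by omega)
  rcases le_or_gt (2 * u) (u + v + 1) with h | h
  · exact hdecr u v h
  · rw [signedMiddle_succ_left_comm, add_comm u v]
    exact hdecr v u (by omega)

theorem one_le_neg_one_pow_mul_of_add_eq (a b k : ℕ) (h : a + b + 2 = 2 * k) :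
    krawtchouk 1 (a + b) k ≤ (-1) ^ k * krawtchouk (a + 1) b k := by
  obtain ⟨j, rfl⟩ : ∃ j, k = j + 1 := ⟨k - 1, by omega⟩
  rcases Nat.eq_zero_or_pos b with rfl | hb
  · rw [zero_right, ← mul_assoc, ← pow_add, ← two_mul, pow_mul, neg_one_sq, one_pow, one_mul]
    exact (one_nonpos _ _ (by omega)).trans (by positivity)
  obtain ⟨m, rfl⟩ : ∃ m, j = m + 1 := ⟨j - 1, by omega⟩
  have hone : krawtchouk 1 (a + b) (m + 1 + 1) = -signedMiddle 1 m := by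
    rw [show a + b = 2 * m + 1 + 1 by omega,
      ← succ_left_eq_succ_right 1 (2 * m + 1) (m + 1) odd_one (by ring),
      show m + 1 + 1 = 1 + m + 1 by ring, show (1 + 1 : ℕ) = 2 * 1 by norm_num,
      eq_neg_one_pow_mul_signedMiddle]
    ring
  obtain ⟨u, v, huv, hx⟩ : ∃ u v, u + v = m ∧
      krawtchouk (a + 1) b (m + 1 + 1) = (-1) ^ (u + 1) * signedMiddle (u + 1) v := by
    obtain ⟨u, rfl | rfl⟩ := Nat.even_or_odd' a
    · refine ⟨u, m - u, by omega, ?_⟩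
      rw [show b = 2 * (m - u) + 1 + 1 by omega,
        ← succ_left_eq_succ_right (2 * u + 1) (2 * (m - u) + 1) (m + 1)
          (odd_two_mul_add_one u) (by omega),
        show 2 * u + 1 + 1 = 2 * (u + 1) by ring, show m + 1 + 1 = u + 1 + (m - u) + 1 by omega,
        eq_neg_one_pow_mul_signedMiddle]
    · refine ⟨u, m - u, by omega, ?_⟩
      rw [show b = 2 * (m - u) + 1 by omega, show 2 * u + 1 + 1 = 2 * (u + 1) by ring,
        show m + 1 + 1 = u + 1 + (m - u) + 1 by omega, eq_neg_one_pow_mul_signedMiddle]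
  have hle := signedMiddle_le_one_left u v
  rw [huv] at hle
  rw [hone, hx, ← mul_assoc, ← pow_add]
  have := signedMiddle_pos (u + 1) v
  rcases neg_one_pow_eq_or ℤ (m + 1 + 1 + (u + 1)) with hs | hs <;> rw [hs] <;> linarith

theorem one_le_neg_one_pow_mul (a b k : ℕ) (h : a + b + 2 ≤ 2 * k) :
    krawtchouk 1 (a + b) k ≤ (-1) ^ k * krawtchouk (a + 1) b k := by
  induction a generalizing k with
  | zero =>
    rcases Nat.even_or_odd k with hk | ⟨j, rfl⟩
    · simp [hk.neg_one_pow]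
    · rw [(odd_two_mul_add_one j).neg_one_pow, zero_add]
      linarith [one_nonpos b (2 * j) (by omega)]
  | succ a ih =>
    rcases h.lt_or_eq with h | h
    · obtain ⟨j, rfl⟩ : ∃ j, k = j + 1 := ⟨k - 1, by omega⟩
      have h1 := ih (j + 1) (by omega)
      have h2 := ih j (by omega)
      rw [show a + 1 + b = a + b + 1 by ring, succ_right 1 (a + b) j, succ_left (a + 1) b j]
      rw [pow_succ] at h1 ⊢
      linarith
    · exact one_le_neg_one_pow_mul_of_add_eq (a + 1) b k h

end krawtchouk

theorem binom_odd_sum_le_general (n k x : ℕ) (hn : n < 2 * k) (hk : Even k)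
    (hx1 : 1 ≤ x) (hxn : x ≤ n) :
    ∑ t ∈ (Finset.range (k + 1)).filter (fun t => Odd t),
        x.choose t * (n - x).choose (k - t) ≤ (n - 1).choose (k - 1) := by
  obtain ⟨a, rfl⟩ : ∃ a, x = a + 1 := ⟨x - 1, by omega⟩
  obtain ⟨b, rfl⟩ : ∃ b, n = a + 1 + b := ⟨n - (a + 1), by omega⟩
  obtain ⟨j, rfl⟩ : ∃ j, k = j + 1 := ⟨k - 1, by omega⟩
  have hK := krawtchouk.one_le_neg_one_pow_mul a b (j + 1) (by omega)
  rw [hk.neg_one_pow, one_mul] at hK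
  have hsum := krawtchouk.two_mul_sum_odd (a + 1) b (j + 1)
  have hone : krawtchouk 1 (a + b) (j + 1) = (a + b).choose (j + 1) - (a + b).choose j := by
    rw [krawtchouk.succ_left, krawtchouk.zero_left, krawtchouk.zero_left]
  have hpascal : (a + 1 + b).choose (j + 1) = (a + b).choose j + (a + b).choose (j + 1) := by
    rw [show a + 1 + b = a + b + 1 by ring, Nat.choose_succ_succ]
  rw [Nat.add_sub_cancel_left, Nat.add_sub_cancel, show a + 1 + b - 1 = a + b by omega]
  rw [hpascal, Nat.cast_add] at hsum
  exact (Nat.cast_le (α := ℤ)).mp (by linarith)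

/-- For `k ≤ n < 2k`, `k` even, and `1 ≤ x ≤ n`:
`Σ_{t odd} C(x,t)·C(n−x,k−t) ≤ C(n−1,k−1)`. -/
theorem binom_odd_sum_le (n k x : ℕ) (hkn : k ≤ n) (hn : n < 2 * k) (hk : Even k)
    (hx1 : 1 ≤ x) (hxn : x ≤ n) :
    ∑ t ∈ (Finset.range (k + 1)).filter (fun t => Odd t),
        x.choose t * (n - x).choose (k - t) ≤ (n - 1).choose (k - 1) :=
  binom_odd_sum_le_general n k x hn hk hx1 hxn
end
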